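/- arXiv:1802.07712 — 7 statements merged into one kernel-verified Lean document; each statement's English description precedes it below -/
import Mathlib

section
/- Let F : Tⁿ → Tⁿ be a continuous, order-preserving, additively homogeneous self-map (n ≥ 1). If the problem 𝒫(F) is feasible, then inf{‖u‖_∞ : u ∈ ℝⁿ and 𝒫(u + F) is infeasible} = |c̄w̄(F)|; if 𝒫(F) is infeasible, then inf{‖u‖_∞ : u ∈ ℝⁿ and 𝒫(u + F) is feasible} = |c̄w̄(F)|. Here the infima are taken in [0, +∞] (the infimum of the empty set being +∞). In other words, the condition number cond(F), defined as the inverse of the minimal sup-norm of an additive perturbation changing the feasibility status of 𝒫(F), equals |c̄w̄(F)|⁻¹. -/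
open scoped ENNReal

noncomputable section

/-- The order topology on `T = ℝ ∪ {-∞}`. -/
instance : TopologicalSpace (WithBot ℝ) := Preorder.topology _

variable {n : ℕ}

/-- The canonical embedding of `ℝⁿ` into `Tⁿ`. -/
def toT (x : Fin n → ℝ) : Fin n → WithBot ℝ := fun i => (x i : WithBot ℝ)

/-- `F` is order-preserving. -/
def OrdPres (F : (Fin n → WithBot ℝ) → (Fin n → WithBot ℝ)) : Prop :=
  ∀ x y, x ≤ y → F x ≤ F y

/-- `F` is additively homogeneous. -/
def AddHomog (F : (Fin n → WithBot ℝ) → (Fin n → WithBot ℝ)) : Prop :=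
  ∀ (c : ℝ) (x : Fin n → WithBot ℝ),
    F (fun i => (c : WithBot ℝ) + x i) = fun i => (c : WithBot ℝ) + F x i

/-- The additive perturbation `u + F` of `F` by a real vector `u`. -/
def pert (u : Fin n → ℝ) (F : (Fin n → WithBot ℝ) → (Fin n → WithBot ℝ)) :
    (Fin n → WithBot ℝ) → (Fin n → WithBot ℝ) :=
  fun x i => (u i : WithBot ℝ) + F x i

/-- Feasibility of the problem `𝒫(F)`: there is `x ∈ Tⁿ` with `x ≠ 𝟘` and `x ≤ F(x)`. -/
def FeasT (F : (Fin n → WithBot ℝ) → (Fin n → WithBot ℝ)) : Prop :=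
  ∃ x : Fin n → WithBot ℝ, x ≠ (fun _ => ⊥) ∧ x ≤ F x

/-- The upper Collatz–Wielandt number of `F`, as an extended real
(`sInf ∅ = ⊤ = +∞` in `EReal`). -/
def ucw (F : (Fin n → WithBot ℝ) → (Fin n → WithBot ℝ)) : EReal :=
  sInf ((fun μ : ℝ => (μ : EReal)) ''
    {μ : ℝ | ∃ z : Fin n → ℝ, ∀ i, F (toT z) i ≤ ((μ + z i : ℝ) : WithBot ℝ)})

/-!
Let `CW(G)` be the set of `μ ∈ ℝ` admitting `z ∈ ℝⁿ` with `G(z) ≤ μ + z`, so that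
`c̄w̄(G) = inf CW(G)`. Two facts tie `CW` to feasibility. If `x ≠ 𝟘` and `x ≤ G(x)`, compare `x`
with the least translate `λ + z` lying above it: homogeneity gives `x ≤ λ + μ + z`, while `x` and
`λ + z` agree in some coordinate, so every `μ ∈ CW(G)` is nonnegative. Conversely, if `0 ∉ CW(G)`,
iterate the capped descent `x ↦ x ∧ (G(x) ∨ (x - 1))` from `0`: a coordinate with `G(x)_i ≤ x_i`
keeps this property, so some coordinate never moves, and by continuity the limit is a nonzero `x`
with `x ≤ G(x)`. A perturbation `u` moves `CW` by at most `‖u‖`, and a constant one by exactly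
that constant; this gives both infima.
-/

instance : OrderTopology (WithBot ℝ) := ⟨rfl⟩

namespace WithBot

theorem coe_add_coe_neg_add_cancel_left (c : ℝ) (y : WithBot ℝ) :
    (c : WithBot ℝ) + ((-c : ℝ) + y) = y := by
  rw [← add_assoc, ← coe_add, add_neg_cancel, coe_zero, zero_add]

theorem coe_neg_add_coe_add_cancel_left (c : ℝ) (y : WithBot ℝ) :
    ((-c : ℝ) : WithBot ℝ) + (c + y) = y := by
  simpa using coe_add_coe_neg_add_cancel_left (-c) y

theorem continuous_coe_add (c : ℝ) : Continuous fun y : WithBot ℝ => (c : WithBot ℝ) + y :=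
  Monotone.continuous_of_surjective (fun _ _ h => add_le_add_right h _)
    fun y => ⟨_, coe_add_coe_neg_add_cancel_left c y⟩

end WithBot

theorem EReal.coe_abs_of_nonneg {s : EReal} (hs : 0 ≤ s) : ((s.abs : ℝ≥0∞) : EReal) = s := by
  induction s using EReal.rec with
  | bot => simp at hs
  | top => rfl
  | coe x => rw [EReal.coe_abs, abs_of_nonneg (EReal.coe_nonneg.1 hs)]

theorem sInf_nnnorm_image_eq_abs {E : Type*} [SeminormedAddGroup E] {S : Set E} {s : EReal}
    (hs : 0 ≤ s) (hle : ∀ u ∈ S, s ≤ ‖u‖) (hex : ∀ t : ℝ, s < t → ∃ u ∈ S, ‖u‖ ≤ t) :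
    sInf ((fun u => (‖u‖₊ : ℝ≥0∞)) '' S) = s.abs := by
  have hcoe (u : E) : (((‖u‖₊ : ℝ≥0∞)) : EReal) = ‖u‖ := rfl
  refine le_antisymm (le_of_forall_gt fun c hc => ?_)
    (le_sInf (Set.forall_mem_image.2 fun u hu => ?_))
  · obtain ⟨t, ht, hst, htc⟩ := ENNReal.lt_iff_exists_real_btwn.1 hc
    have hst' : s < t := by
      simpa [EReal.coe_abs_of_nonneg hs, EReal.coe_ennreal_ofReal, ht] using
        EReal.coe_ennreal_lt_coe_ennreal_iff.2 hst
    obtain ⟨u, hu, hut⟩ := hex t hst'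
    calc sInf ((fun u => (‖u‖₊ : ℝ≥0∞)) '' S) ≤ ‖u‖₊ := sInf_le (Set.mem_image_of_mem _ hu)
      _ = ENNReal.ofReal ‖u‖ := (ofReal_norm u).symm
      _ ≤ ENNReal.ofReal t := ENNReal.ofReal_le_ofReal hut
      _ < c := htc
  · rw [← EReal.coe_ennreal_le_coe_ennreal_iff, hcoe, EReal.coe_abs_of_nonneg hs]
    exact hle u hu

open WithBot

def cwSet (F : (Fin n → WithBot ℝ) → (Fin n → WithBot ℝ)) : Set ℝ :=
  {μ : ℝ | ∃ z : Fin n → ℝ, ∀ i, F (toT z) i ≤ ((μ + z i : ℝ) : WithBot ℝ)}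

section CollatzWielandt

variable {F : (Fin n → WithBot ℝ) → (Fin n → WithBot ℝ)}

theorem ucw_le_of_mem_cwSet {μ : ℝ} (hμ : μ ∈ cwSet F) : ucw F ≤ μ :=
  sInf_le (Set.mem_image_of_mem _ hμ)

theorem le_ucw_of_forall_mem_cwSet {a : EReal} (h : ∀ μ ∈ cwSet F, a ≤ μ) : a ≤ ucw F :=
  le_sInf (Set.forall_mem_image.2 h)

theorem zero_mem_cwSet_of_le {x : Fin n → WithBot ℝ} (hx : ∀ i, x i ≠ ⊥) (hle : F x ≤ x) :
    0 ∈ cwSet F := by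
  refine ⟨fun i => (x i).unbot (hx i), fun i => ?_⟩
  have hz : toT (fun i => (x i).unbot (hx i)) = x := funext fun i => coe_unbot (x i) (hx i)
  simpa [hz] using hle i

end CollatzWielandt

section Perturbation

variable {F : (Fin n → WithBot ℝ) → (Fin n → WithBot ℝ)}

theorem OrdPres.pert (hmono : OrdPres F) (u : Fin n → ℝ) : OrdPres (pert u F) :=
  fun x y h i => add_le_add_right (hmono x y h i) _

theorem AddHomog.pert (hhom : AddHomog F) (u : Fin n → ℝ) : AddHomog (pert u F) := by
  intro c x
  funext i
  simp only [_root_.pert, hhom c x]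
  exact add_left_comm _ _ _

theorem Continuous.pert (hcont : Continuous F) (u : Fin n → ℝ) : Continuous (pert u F) :=
  continuous_pi fun i => (continuous_coe_add (u i)).comp ((continuous_apply i).comp hcont)

theorem pert_zero : pert 0 F = F := by
  funext x i
  simp [pert]

theorem pert_neg_pert (u : Fin n → ℝ) : pert (-u) (pert u F) = F := by
  funext x i
  exact coe_neg_add_coe_add_cancel_left (u i) (F x i)

theorem add_mem_cwSet_pert {μ c : ℝ} (hμ : μ ∈ cwSet F) {u : Fin n → ℝ} (hu : ∀ i, u i ≤ c) :
    μ + c ∈ cwSet (pert u F) := by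
  obtain ⟨z, hz⟩ := hμ
  refine ⟨z, fun i => ?_⟩
  calc pert u F (toT z) i = (u i : WithBot ℝ) + F (toT z) i := rfl
    _ ≤ (c : WithBot ℝ) + ((μ + z i : ℝ) : WithBot ℝ) := add_le_add (coe_le_coe.2 (hu i)) (hz i)
    _ = ((μ + c + z i : ℝ) : WithBot ℝ) := by push_cast; abel

end Perturbation

theorem exists_le_coe_add_eq {x : Fin n → WithBot ℝ} (hx : x ≠ fun _ => ⊥) (z : Fin n → ℝ) :
    ∃ (lam : ℝ) (i : Fin n), (x ≤ fun j => (lam : WithBot ℝ) + toT z j) ∧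
      x i = ((lam + z i : ℝ) : WithBot ℝ) := by
  obtain ⟨j, hj⟩ := Function.ne_iff.1 hx
  have : Nonempty (Fin n) := ⟨j⟩
  set f : Fin n → WithBot ℝ := fun i => ((-z i : ℝ) : WithBot ℝ) + x i
  have hx_eq (i : Fin n) : x i = (z i : WithBot ℝ) + f i :=
    (coe_add_coe_neg_add_cancel_left (z i) (x i)).symm
  obtain ⟨i, hi⟩ := Finite.exists_max f
  obtain ⟨lam, hlam⟩ := ne_bot_iff_exists.1 <|
    ne_bot_of_le_ne_bot (add_ne_bot.2 ⟨coe_ne_bot, hj⟩) (hi j)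
  refine ⟨lam, i, fun k => ?_, ?_⟩
  · rw [hx_eq k, add_comm, hlam]
    exact add_le_add_left (hi k) _
  · rw [hx_eq i, ← hlam, ← coe_add, add_comm]

theorem nonneg_of_feasT_of_mem_cwSet {F : (Fin n → WithBot ℝ) → (Fin n → WithBot ℝ)} (hmono : OrdPres F)
    (hhom : AddHomog F) (hfeas : FeasT F) {μ : ℝ} (hμ : μ ∈ cwSet F) : 0 ≤ μ := by
  obtain ⟨x, hx, hxF⟩ := hfeas
  obtain ⟨z, hz⟩ := hμ
  obtain ⟨lam, i, hle, heq⟩ := exists_le_coe_add_eq hx z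
  have hx_le : x ≤ fun j => (lam : WithBot ℝ) + F (toT z) j := by
    rw [← hhom]
    exact hxF.trans (hmono _ _ hle)
  have : ((lam + z i : ℝ) : WithBot ℝ) ≤ ((lam + (μ + z i) : ℝ) : WithBot ℝ) :=
    calc ((lam + z i : ℝ) : WithBot ℝ) = x i := heq.symm
      _ ≤ (lam : WithBot ℝ) + F (toT z) i := hx_le i
      _ ≤ (lam : WithBot ℝ) + ((μ + z i : ℝ) : WithBot ℝ) := add_le_add_right (hz i) _
      _ = ((lam + (μ + z i) : ℝ) : WithBot ℝ) := (coe_add _ _).symm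
  linarith [coe_le_coe.1 this]

section CappedDescent

open Filter Topology

variable {G : (Fin n → WithBot ℝ) → (Fin n → WithBot ℝ)}

/-- The floor `x - 1` keeps the iterates of this step real, so that they can be tested against
`cwSet G`. -/
def capStep (G : (Fin n → WithBot ℝ) → (Fin n → WithBot ℝ)) (x : Fin n → WithBot ℝ) :
    Fin n → WithBot ℝ :=
  fun i => x i ⊓ (G x i ⊔ (((-1 : ℝ) : WithBot ℝ) + x i))

theorem capStep_le (x : Fin n → WithBot ℝ) : capStep G x ≤ x :=
  fun _ => inf_le_left

theorem capStep_apply_of_lt {x : Fin n → WithBot ℝ} {i : Fin n} (h : x i < G x i) :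
    capStep G x i = x i :=
  inf_eq_left.2 (h.le.trans le_sup_left)

theorem OrdPres.le_capStep_apply (hmono : OrdPres G) {x : Fin n → WithBot ℝ} {i : Fin n}
    (h : G x i ≤ x i) : G (capStep G x) i ≤ capStep G x i :=
  (hmono _ _ (capStep_le x) i).trans (le_inf h le_sup_left)

theorem capStep_apply_ne_bot {x : Fin n → WithBot ℝ} {i : Fin n} (h : x i ≠ ⊥) :
    capStep G x i ≠ ⊥ := by
  have hdown : ((-1 : ℝ) : WithBot ℝ) + x i ≤ x i :=
    add_le_of_nonpos_left (coe_le_coe.2 (by norm_num))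
  exact ne_bot_of_le_ne_bot (add_ne_bot.2 ⟨coe_ne_bot, h⟩) (le_inf hdown le_sup_right)

theorem le_of_capStep_eq {x : Fin n → WithBot ℝ} (h : capStep G x = x) : x ≤ G x := by
  intro i
  by_cases hbot : x i = ⊥
  · simp [hbot]
  obtain ⟨r, hr⟩ := ne_bot_iff_exists.1 hbot
  have hdown : ((-1 : ℝ) : WithBot ℝ) + x i < x i := by
    rw [← hr, ← coe_add, coe_lt_coe]
    linarith
  have hsup : x i ≤ G x i ⊔ (((-1 : ℝ) : WithBot ℝ) + x i) := inf_eq_left.1 (congrFun h i)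
  exact (le_sup_iff.1 hsup).resolve_right hdown.not_ge

theorem Continuous.capStep (hcont : Continuous G) : Continuous (capStep G) :=
  continuous_pi fun i => (continuous_apply i).inf
    (((continuous_apply i).comp hcont).sup ((continuous_coe_add (-1)).comp (continuous_apply i)))

theorem antitone_iterate_capStep (x : Fin n → WithBot ℝ) :
    Antitone fun k => (capStep G)^[k] x :=
  antitone_nat_of_succ_le fun k => by
    rw [Function.iterate_succ_apply']
    exact capStep_le _

theorem iInf_iterate_capStep_le (hcont : Continuous G) (x : Fin n → WithBot ℝ) :
    (⨅ k, (capStep G)^[k] x) ≤ G (⨅ k, (capStep G)^[k] x) := by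
  have hlim : Tendsto (fun k => (capStep G)^[k] x) atTop (𝓝 (⨅ k, (capStep G)^[k] x)) :=
    tendsto_atTop_ciInf (antitone_iterate_capStep x) (OrderBot.bddBelow _)
  refine le_of_capStep_eq (tendsto_nhds_unique (hcont.capStep.continuousAt.tendsto.comp hlim) ?_)
  simpa only [Function.comp_def, Function.iterate_succ_apply'] using
    (tendsto_add_atTop_iff_nat 1).2 hlim

theorem iterate_capStep_apply_ne_bot {x : Fin n → WithBot ℝ} (hx : ∀ i, x i ≠ ⊥) (k : ℕ)
    (i : Fin n) : (capStep G)^[k] x i ≠ ⊥ := by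
  induction k with
  | zero => exact hx i
  | succ k ih =>
    rw [Function.iterate_succ_apply']
    exact capStep_apply_ne_bot ih

theorem OrdPres.le_iterate_capStep_apply (hmono : OrdPres G) (x : Fin n → WithBot ℝ)
    (i : Fin n) {k m : ℕ} (hkm : k ≤ m) (h : G ((capStep G)^[k] x) i ≤ (capStep G)^[k] x i) :
    G ((capStep G)^[m] x) i ≤ (capStep G)^[m] x i := by
  induction m, hkm using Nat.le_induction with
  | base => exact h
  | succ m _ ih =>
    rw [Function.iterate_succ_apply']
    exact hmono.le_capStep_apply ih

theorem exists_forall_lt_iterate_capStep (hmono : OrdPres G) (h0 : (0 : ℝ) ∉ cwSet G) :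
    ∃ i, ∀ k, (capStep G)^[k] 0 i < G ((capStep G)^[k] 0) i := by
  by_contra! h
  choose k hk using h
  have hreal : ∀ i, (capStep G)^[Finset.univ.sup k] 0 i ≠ ⊥ :=
    iterate_capStep_apply_ne_bot (fun _ => coe_ne_bot) _
  exact h0 <| zero_mem_cwSet_of_le hreal fun i =>
    hmono.le_iterate_capStep_apply 0 i (Finset.le_sup (Finset.mem_univ i)) (hk i)

theorem feasT_of_zero_not_mem_cwSet (hcont : Continuous G) (hmono : OrdPres G)
    (h0 : (0 : ℝ) ∉ cwSet G) : FeasT G := by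
  obtain ⟨i, hi⟩ := exists_forall_lt_iterate_capStep hmono h0
  have hfix (k : ℕ) : (capStep G)^[k] 0 i = 0 := by
    induction k with
    | zero => rfl
    | succ k ih => rw [Function.iterate_succ_apply', capStep_apply_of_lt (hi k), ih]
  refine ⟨⨅ k, (capStep G)^[k] 0, fun h => ?_, iInf_iterate_capStep_le hcont 0⟩
  simpa [iInf_apply, hfix] using congrFun h i

end CappedDescent

theorem neg_le_ucw_of_feasT_pert {F : (Fin n → WithBot ℝ) → (Fin n → WithBot ℝ)}
    (hmono : OrdPres F) (hhom : AddHomog F) {u : Fin n → ℝ} (hfeas : FeasT (pert u F)) {c : ℝ}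
    (hu : ∀ i, u i ≤ c) : ((-c : ℝ) : EReal) ≤ ucw F :=
  le_ucw_of_forall_mem_cwSet fun μ hμ => by
    have := nonneg_of_feasT_of_mem_cwSet (hmono.pert u) (hhom.pert u) hfeas (add_mem_cwSet_pert hμ hu)
    exact EReal.coe_le_coe_iff.2 (by linarith)

theorem ucw_le_of_not_feasT_pert {F : (Fin n → WithBot ℝ) → (Fin n → WithBot ℝ)}
    (hcont : Continuous F) (hmono : OrdPres F) {u : Fin n → ℝ} (hinfeas : ¬ FeasT (pert u F))
    {c : ℝ} (hu : ∀ i, -u i ≤ c) : ucw F ≤ c := by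
  have h0 : (0 : ℝ) ∈ cwSet (pert u F) :=
    not_not.1 fun h => hinfeas (feasT_of_zero_not_mem_cwSet (hcont.pert u) (hmono.pert u) h)
  have := add_mem_cwSet_pert h0 (u := -u) hu
  rw [pert_neg_pert, zero_add] at this
  exact ucw_le_of_mem_cwSet this

theorem stmt1_general (F : (Fin n → WithBot ℝ) → (Fin n → WithBot ℝ))
    (hcont : Continuous F) (hmono : OrdPres F) (hhom : AddHomog F) :
    (FeasT F →
      sInf ((fun u : Fin n → ℝ => (‖u‖₊ : ℝ≥0∞)) '' {u | ¬ FeasT (pert u F)}) =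
        (ucw F).abs) ∧
    (¬ FeasT F →
      sInf ((fun u : Fin n → ℝ => (‖u‖₊ : ℝ≥0∞)) '' {u | FeasT (pert u F)}) =
        (ucw F).abs) := by
  have hcoord (u : Fin n → ℝ) (i : Fin n) : |u i| ≤ ‖u‖ := norm_le_pi_norm u i
  constructor
  · intro hfeas
    have h0 : 0 ≤ ucw F := by
      simpa using neg_le_ucw_of_feasT_pert hmono hhom (u := 0) (c := 0) (by rwa [pert_zero])
        fun _ => le_rfl
    refine sInf_nnnorm_image_eq_abs h0 (fun u hu => ?_)
      fun t ht => ⟨fun _ => -t, fun hfeas' => ?_, ?_⟩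
    · exact ucw_le_of_not_feasT_pert hcont hmono hu fun i => (neg_le_abs _).trans (hcoord u i)
    · exact ht.not_ge (by simpa using neg_le_ucw_of_feasT_pert hmono hhom hfeas' fun _ => le_rfl)
    · simpa [abs_of_pos (EReal.coe_pos.1 (h0.trans_lt ht))] using pi_norm_const_le (-t)
  · intro hinfeas
    have h0 : 0 ≤ -ucw F := EReal.neg_nonneg.2 <| by
      simpa using ucw_le_of_not_feasT_pert hcont hmono (u := 0) (c := 0) (by rwa [pert_zero])
        fun _ => by simp
    rw [← EReal.abs_neg]
    refine sInf_nnnorm_image_eq_abs h0 (fun u hu => ?_)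
      fun t ht => ⟨fun _ => t, not_not.1 fun hinfeas' => ?_, ?_⟩
    · exact EReal.neg_le.1 <|
        neg_le_ucw_of_feasT_pert hmono hhom hu fun i => (le_abs_self _).trans (hcoord u i)
    · have := ucw_le_of_not_feasT_pert hcont hmono hinfeas' (c := -t) fun _ => le_rfl
      exact ht.not_ge (by simpa using EReal.neg_le_neg_iff.2 this)
    · simpa [abs_of_pos (EReal.coe_pos.1 (h0.trans_lt ht))] using pi_norm_const_le t

/-- The condition number of `𝒫(F)` equals `|c̄w̄(F)|⁻¹`: the minimal sup-norm of an additive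
perturbation changing the feasibility status of `𝒫(F)` equals `|c̄w̄(F)|` (in `[0, +∞]`). -/
theorem stmt1 (hn : 1 ≤ n) (F : (Fin n → WithBot ℝ) → (Fin n → WithBot ℝ))
    (hcont : Continuous F) (hmono : OrdPres F) (hhom : AddHomog F) :
    (FeasT F →
      sInf ((fun u : Fin n → ℝ => (‖u‖₊ : ℝ≥0∞)) '' {u | ¬ FeasT (pert u F)}) =
        (ucw F).abs) ∧
    (¬ FeasT F →
      sInf ((fun u : Fin n → ℝ => (‖u‖₊ : ℝ≥0∞)) '' {u | FeasT (pert u F)}) =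
        (ucw F).abs) :=
  stmt1_general F hcont hmono hhom
end
end

section
/- (Duality theorem.) Let A be an m×n matrix and B an m×q matrix with entries in T = ℝ ∪ {−∞} such that every column of A has at least one finite entry, every row of A has at least one finite entry, and every row of B has at least one finite entry, and let P be a q×n row-stochastic matrix. Let F : ℝⁿ → ℝⁿ be the associated Shapley operator and F* : ℝᵐ → ℝᵐ the dual Shapley operator. Then c̄w̄(F*) = −c̲w̲(F). -/
noncomputable section

variable {m n q : ℕ}

/-- The real value of a finite element of `T = ℝ ∪ {-∞}` (junk value `0` at `-∞`). -/
def sval (a : WithBot ℝ) : ℝ := a.unbotD 0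

/-- The Shapley operator `F : ℝⁿ → ℝⁿ` associated with `A ∈ T^{m×n}`, `B ∈ T^{m×q}` and a
row-stochastic `P ∈ ℝ^{q×n}`:
`F(x)_j = min_{i : A_{ij} ≠ -∞} ( -A_{ij} + max_{k : B_{ik} ≠ -∞} ( B_{ik} + Σ_l P_{kl} x_l ) )`. -/
def shapley (A : Fin m → Fin n → WithBot ℝ) (B : Fin m → Fin q → WithBot ℝ)
    (P : Fin q → Fin n → ℝ) (x : Fin n → ℝ) : Fin n → ℝ := fun j =>
  sInf {r : ℝ | ∃ i, A i j ≠ ⊥ ∧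
    r = - sval (A i j) +
      sSup {s : ℝ | ∃ k, B i k ≠ ⊥ ∧ s = sval (B i k) + ∑ l, P k l * x l}}

/-- The dual Shapley operator `F* : ℝᵐ → ℝᵐ`:
`F*(y)_i = min_{k : B_{ik} ≠ -∞} ( -B_{ik} + Σ_l P_{kl} · max_{i' : A_{i'l} ≠ -∞} (A_{i'l} + y_{i'}) )`. -/
def dualShapley (A : Fin m → Fin n → WithBot ℝ) (B : Fin m → Fin q → WithBot ℝ)
    (P : Fin q → Fin n → ℝ) (y : Fin m → ℝ) : Fin m → ℝ := fun i =>
  sInf {r : ℝ | ∃ k, B i k ≠ ⊥ ∧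
    r = - sval (B i k) +
      ∑ l, P k l * sSup {s : ℝ | ∃ i', A i' l ≠ ⊥ ∧ s = sval (A i' l) + y i'}}

/-- The upper Collatz–Wielandt number of a self-map of `ℝ^d`, as an extended real. -/
def ucwR {d : ℕ} (G : (Fin d → ℝ) → (Fin d → ℝ)) : EReal :=
  sInf ((fun μ : ℝ => (μ : EReal)) '' {μ : ℝ | ∃ z : Fin d → ℝ, ∀ i, G z i ≤ μ + z i})

/-- The lower Collatz–Wielandt number of a self-map of `ℝ^d`, as an extended real. -/
def lcwR {d : ℕ} (G : (Fin d → ℝ) → (Fin d → ℝ)) : EReal :=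
  sSup ((fun μ : ℝ => (μ : EReal)) '' {μ : ℝ | ∃ z : Fin d → ℝ, ∀ i, μ + z i ≤ G z i})

/-!
The two Collatz–Wielandt sets are exchanged by `μ ↦ -μ`. If `F* y ≤ μ + y`, then
`x := -(Aᵀ ⊗ y)` satisfies `-μ + x ≤ F x`; conversely, if `-μ + x ≤ F x`, then
`y := -(B ⊗ P x)` satisfies `F* y ≤ μ + y`, where `⊗` is the max-plus matrix-vector product.
The second direction uses that `P` is row-stochastic: `v ≤ μ - x` termwise implies
`P_k · v ≤ μ - P_k · x`.
-/

open scoped Matrix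

section FiniteExtrema

variable {ι α : Type*} {p : ι → Prop} {f : ι → α}

theorem finite_setOf_exists_and_eq [Finite ι] (p : ι → Prop) (f : ι → α) :
    {r | ∃ i, p i ∧ r = f i}.Finite :=
  (Set.finite_range f).subset fun _ ⟨i, _, hr⟩ => ⟨i, hr.symm⟩

variable [ConditionallyCompleteLinearOrder α] {c : α}

theorem le_csInf_setOf_exists_and_eq (hp : ∃ i, p i) (h : ∀ i, p i → c ≤ f i) :
    c ≤ sInf {r | ∃ i, p i ∧ r = f i} := by
  obtain ⟨i, hi⟩ := hp
  refine le_csInf ⟨f i, i, hi, rfl⟩ ?_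
  rintro r ⟨j, hj, rfl⟩
  exact h j hj

theorem csSup_setOf_exists_and_eq_le (hp : ∃ i, p i) (h : ∀ i, p i → f i ≤ c) :
    sSup {r | ∃ i, p i ∧ r = f i} ≤ c :=
  le_csInf_setOf_exists_and_eq (α := αᵒᵈ) hp h

variable [Finite ι]

theorem csInf_setOf_exists_and_eq_le {i : ι} (hi : p i) :
    sInf {r | ∃ i, p i ∧ r = f i} ≤ f i :=
  csInf_le (finite_setOf_exists_and_eq p f).bddBelow ⟨i, hi, rfl⟩

theorem le_csSup_setOf_exists_and_eq {i : ι} (hi : p i) :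
    f i ≤ sSup {r | ∃ i, p i ∧ r = f i} :=
  le_csSup (finite_setOf_exists_and_eq p f).bddAbove ⟨i, hi, rfl⟩

theorem exists_csInf_setOf_exists_and_eq (hp : ∃ i, p i) :
    ∃ i, p i ∧ sInf {r | ∃ i, p i ∧ r = f i} = f i := by
  obtain ⟨i, hi⟩ := hp
  have hne : {r | ∃ i, p i ∧ r = f i}.Nonempty := ⟨f i, i, hi, rfl⟩
  exact hne.csInf_mem (finite_setOf_exists_and_eq p f)

end FiniteExtrema

theorem EReal.sInf_image_neg (T : Set EReal) : sInf (Neg.neg '' T) = -sSup T := by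
  apply le_antisymm
  · refine EReal.le_neg_of_le_neg (sSup_le fun a ha => EReal.le_neg_of_le_neg ?_)
    exact sInf_le ⟨a, ha, rfl⟩
  · refine le_sInf ?_
    rintro _ ⟨a, ha, rfl⟩
    exact EReal.neg_le_neg_iff.mpr (le_sSup ha)

theorem EReal.sInf_coe_image_eq_neg_sSup_coe_image {S T : Set ℝ} (h : ∀ μ, μ ∈ S ↔ -μ ∈ T) :
    sInf (((↑) : ℝ → EReal) '' S) = -sSup (((↑) : ℝ → EReal) '' T) := by
  have hST : ((↑) : ℝ → EReal) '' S = Neg.neg '' (((↑) : ℝ → EReal) '' T) := by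
    ext e
    constructor
    · rintro ⟨μ, hμ, rfl⟩
      exact ⟨↑(-μ), ⟨-μ, (h μ).mp hμ, rfl⟩, by rw [EReal.coe_neg, neg_neg]⟩
    · rintro ⟨_, ⟨ν, hν, rfl⟩, rfl⟩
      exact ⟨-ν, (h (-ν)).mpr (by rwa [neg_neg]), EReal.coe_neg ν⟩
  rw [hST, EReal.sInf_image_neg]

theorem dotProduct_le_sub_dotProduct_of_stochastic {ι : Type*} [Fintype ι] {w v x : ι → ℝ}
    {μ : ℝ} (hw : ∀ l, 0 ≤ w l) (hw_sum : ∑ l, w l = 1) (hv : ∀ l, v l ≤ μ - x l) :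
    w ⬝ᵥ v ≤ μ - w ⬝ᵥ x :=
  calc w ⬝ᵥ v ≤ ∑ l, w l * (μ - x l) :=
        Finset.sum_le_sum fun l _ => mul_le_mul_of_nonneg_left (hv l) (hw l)
    _ = μ - w ⬝ᵥ x := by
        simp only [mul_sub, Finset.sum_sub_distrib, ← Finset.sum_mul, hw_sum, one_mul,
          dotProduct]

section MaxPlus

variable {ι κ : Type*}

def maxPlusMulVec (M : ι → κ → WithBot ℝ) (v : κ → ℝ) (i : ι) : ℝ :=
  sSup {s | ∃ k, M i k ≠ ⊥ ∧ s = sval (M i k) + v k}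

variable {M : ι → κ → WithBot ℝ} {v : κ → ℝ} {i : ι}

theorem le_maxPlusMulVec [Finite κ] {k : κ} (hk : M i k ≠ ⊥) :
    sval (M i k) + v k ≤ maxPlusMulVec M v i :=
  le_csSup_setOf_exists_and_eq (f := fun k => sval (M i k) + v k) hk

theorem maxPlusMulVec_le {c : ℝ} (hM : ∃ k, M i k ≠ ⊥)
    (h : ∀ k, M i k ≠ ⊥ → sval (M i k) + v k ≤ c) : maxPlusMulVec M v i ≤ c :=
  csSup_setOf_exists_and_eq_le hM h

end MaxPlus

section Duality

variable (A : Fin m → Fin n → WithBot ℝ) (B : Fin m → Fin q → WithBot ℝ)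
  (P : Fin q → Fin n → ℝ)

theorem shapley_eq (x : Fin n → ℝ) (j : Fin n) :
    shapley A B P x j =
      sInf {r | ∃ i, A i j ≠ ⊥ ∧ r = -sval (A i j) + maxPlusMulVec B (P *ᵥ x) i} :=
  rfl

theorem dualShapley_eq (y : Fin m → ℝ) (i : Fin m) :
    dualShapley A B P y i =
      sInf {r | ∃ k, B i k ≠ ⊥ ∧ r = -sval (B i k) + P k ⬝ᵥ maxPlusMulVec Aᵀ y} :=
  rfl

variable {A B P} {x : Fin n → ℝ} {y : Fin m → ℝ} {i : Fin m} {j : Fin n} {k : Fin q}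

theorem shapley_le (hij : A i j ≠ ⊥) :
    shapley A B P x j ≤ -sval (A i j) + maxPlusMulVec B (P *ᵥ x) i := by
  rw [shapley_eq]
  exact csInf_setOf_exists_and_eq_le hij

theorem le_shapley {c : ℝ} (hA : ∃ i, A i j ≠ ⊥)
    (h : ∀ i, A i j ≠ ⊥ → c ≤ -sval (A i j) + maxPlusMulVec B (P *ᵥ x) i) :
    c ≤ shapley A B P x j := by
  rw [shapley_eq]
  exact le_csInf_setOf_exists_and_eq hA h

theorem dualShapley_le (hik : B i k ≠ ⊥) :
    dualShapley A B P y i ≤ -sval (B i k) + P k ⬝ᵥ maxPlusMulVec Aᵀ y := by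
  rw [dualShapley_eq]
  exact csInf_setOf_exists_and_eq_le hik

theorem exists_dualShapley_eq (hB : ∃ k, B i k ≠ ⊥) :
    ∃ k, B i k ≠ ⊥ ∧ dualShapley A B P y i = -sval (B i k) + P k ⬝ᵥ maxPlusMulVec Aᵀ y := by
  rw [dualShapley_eq]
  exact exists_csInf_setOf_exists_and_eq hB

theorem exists_le_shapley_of_dualShapley_le (hAcol : ∀ j, ∃ i, A i j ≠ ⊥)
    (hBrow : ∀ i, ∃ k, B i k ≠ ⊥) {μ : ℝ} (hy : ∀ i, dualShapley A B P y i ≤ μ + y i) :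
    ∃ x : Fin n → ℝ, ∀ j, -μ + x j ≤ shapley A B P x j := by
  set a := maxPlusMulVec Aᵀ y
  refine ⟨-a, fun j => le_shapley (hAcol j) fun i hij => ?_⟩
  obtain ⟨k, hik, hk⟩ := exists_dualShapley_eq (P := P) (y := y) (hBrow i)
  have hdual : -sval (B i k) + P k ⬝ᵥ a ≤ μ + y i := hk ▸ hy i
  have hB : sval (B i k) + P k ⬝ᵥ -a ≤ maxPlusMulVec B (P *ᵥ -a) i :=
    le_maxPlusMulVec (v := P *ᵥ -a) hik
  have hA : sval (A i j) + y i ≤ a j := le_maxPlusMulVec (M := Aᵀ) hij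
  rw [dotProduct_neg] at hB
  rw [Pi.neg_apply]
  linarith

theorem exists_dualShapley_le_of_le_shapley (hAcol : ∀ j, ∃ i, A i j ≠ ⊥)
    (hBrow : ∀ i, ∃ k, B i k ≠ ⊥) (hPnn : ∀ k l, 0 ≤ P k l) (hPsum : ∀ k, ∑ l, P k l = 1)
    {μ : ℝ} (hx : ∀ j, -μ + x j ≤ shapley A B P x j) :
    ∃ y : Fin m → ℝ, ∀ i, dualShapley A B P y i ≤ μ + y i := by
  set b := maxPlusMulVec B (P *ᵥ x)
  have ha : ∀ l, maxPlusMulVec Aᵀ (-b) l ≤ μ - x l := fun l =>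
    maxPlusMulVec_le (hAcol l) fun i hil => by
      have hF : shapley A B P x l ≤ -sval (A i l) + b i := shapley_le hil
      show sval (A i l) + -b i ≤ μ - x l
      linarith [hx l]
  refine ⟨-b, fun i => ?_⟩
  suffices b i ≤ μ - dualShapley A B P (-b) i by rw [Pi.neg_apply]; linarith
  refine maxPlusMulVec_le (hBrow i) fun k hik => ?_
  have hF := dualShapley_le (A := A) (P := P) (y := -b) hik
  have hP := dotProduct_le_sub_dotProduct_of_stochastic (hPnn k) (hPsum k) ha
  change sval (B i k) + P k ⬝ᵥ x ≤ _
  linarith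

theorem exists_dualShapley_le_iff_exists_le_shapley (hAcol : ∀ j, ∃ i, A i j ≠ ⊥)
    (hBrow : ∀ i, ∃ k, B i k ≠ ⊥) (hPnn : ∀ k l, 0 ≤ P k l) (hPsum : ∀ k, ∑ l, P k l = 1)
    (μ : ℝ) :
    (∃ y : Fin m → ℝ, ∀ i, dualShapley A B P y i ≤ μ + y i) ↔
      ∃ x : Fin n → ℝ, ∀ j, -μ + x j ≤ shapley A B P x j :=
  ⟨fun ⟨_, hy⟩ => exists_le_shapley_of_dualShapley_le hAcol hBrow hy,
    fun ⟨_, hx⟩ => exists_dualShapley_le_of_le_shapley hAcol hBrow hPnn hPsum hx⟩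

end Duality

theorem stmt2_general
    (A : Fin m → Fin n → WithBot ℝ) (B : Fin m → Fin q → WithBot ℝ)
    (P : Fin q → Fin n → ℝ)
    (hAcol : ∀ j, ∃ i, A i j ≠ ⊥)
    (hBrow : ∀ i, ∃ k, B i k ≠ ⊥)
    (hPnn : ∀ k l, 0 ≤ P k l)
    (hPsum : ∀ k, ∑ l, P k l = 1) :
    ucwR (dualShapley A B P) = - lcwR (shapley A B P) :=
  EReal.sInf_coe_image_eq_neg_sSup_coe_image
    (exists_dualShapley_le_iff_exists_le_shapley hAcol hBrow hPnn hPsum)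

/-- Duality theorem: `c̄w̄(F*) = -c̲w̲(F)`. -/
theorem stmt2 (hm : 0 < m) (hn : 0 < n) (hq : 0 < q)
    (A : Fin m → Fin n → WithBot ℝ) (B : Fin m → Fin q → WithBot ℝ)
    (P : Fin q → Fin n → ℝ)
    (hAcol : ∀ j, ∃ i, A i j ≠ ⊥)
    (hArow : ∀ i, ∃ j, A i j ≠ ⊥)
    (hBrow : ∀ i, ∃ k, B i k ≠ ⊥)
    (hPnn : ∀ k l, 0 ≤ P k l)
    (hPsum : ∀ k, ∑ l, P k l = 1) :
    ucwR (dualShapley A B P) = - lcwR (shapley A B P) :=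
  stmt2_general A B P hAcol hBrow hPnn hPsum
end
end

section
/- Let F be an order-preserving and additively homogeneous self-map of Tⁿ, let z ∈ ℝⁿ and r ∈ ℝ, r ≥ 0, and assume r ≤ min_i ( F(z)_i − z_i ) (in particular every entry of F(z) is finite). Then every x ∈ ℝⁿ with ‖x − z‖_H ≤ r satisfies x ≤ F(x) in Tⁿ; that is, the Hilbert ball B_H(z, r) is contained in S(F) := { x ∈ Tⁿ : x ≤ F(x) }. -/
noncomputable section

variable {n : ℕ}

/-- Hilbert's seminorm `‖x‖_H = max_i x_i - min_i x_i` on `ℝⁿ`. -/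
def hnorm (x : Fin n → ℝ) : ℝ := (⨆ i, x i) - (⨅ i, x i)

theorem le_iInf_add_hnorm (x : Fin n → ℝ) (i : Fin n) : x i ≤ (⨅ j, x j) + hnorm x := by
  have : x i ≤ ⨆ j, x j := le_ciSup (Set.finite_range x).bddAbove i
  rw [hnorm]
  linarith

theorem const_add_apply_le_of_const_add_le {F : (Fin n → WithBot ℝ) → (Fin n → WithBot ℝ)}
    (hmono : OrdPres F) (hhom : AddHomog F) {c : ℝ} {y x : Fin n → WithBot ℝ}
    (h : ∀ j, (c : WithBot ℝ) + y j ≤ x j) (i : Fin n) : (c : WithBot ℝ) + F y i ≤ F x i := by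
  rw [← congrFun (hhom c y) i]
  exact hmono _ _ h i

theorem stmt6_general (F : (Fin n → WithBot ℝ) → (Fin n → WithBot ℝ))
    (hmono : OrdPres F) (hhom : AddHomog F)
    (z : Fin n → ℝ) (r : ℝ)
    (hle : ∀ i, ((r + z i : ℝ) : WithBot ℝ) ≤ F (toT z) i) :
    ∀ x : Fin n → ℝ, hnorm (x - z) ≤ r → toT x ≤ F (toT x) := by
  intro x hx i
  -- `x` lies above the translate `m + z` of `z`, where `m = min_j (x_j - z_j)`.
  set m := ⨅ j, (x - z) j
  have hzx : ∀ j, (m : WithBot ℝ) + toT z j ≤ toT x j := fun j => by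
    have : m ≤ x j - z j := ciInf_le (Set.finite_range (x - z)).bddBelow j
    exact WithBot.coe_le_coe.mpr (by linarith)
  have hxi : x i ≤ m + (r + z i) := by
    have : (x - z) i ≤ m + hnorm (x - z) := le_iInf_add_hnorm (x - z) i
    rw [Pi.sub_apply] at this
    linarith
  calc toT x i ≤ (m : WithBot ℝ) + ((r + z i : ℝ) : WithBot ℝ) := WithBot.coe_le_coe.mpr hxi
    _ ≤ (m : WithBot ℝ) + F (toT z) i := add_le_add_right (hle i) _
    _ ≤ F (toT x) i := const_add_apply_le_of_const_add_le hmono hhom hzx i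

/-- If `r ≤ min_i (F(z)_i - z_i)` then the Hilbert ball `B_H(z, r)` is contained in
`S(F) = { x : x ≤ F(x) }`. -/
theorem stmt6 (F : (Fin n → WithBot ℝ) → (Fin n → WithBot ℝ))
    (hmono : OrdPres F) (hhom : AddHomog F)
    (z : Fin n → ℝ) (r : ℝ) (hr : 0 ≤ r)
    (hle : ∀ i, ((r + z i : ℝ) : WithBot ℝ) ≤ F (toT z) i) :
    ∀ x : Fin n → ℝ, hnorm (x - z) ≤ r → toT x ≤ F (toT x) :=
  stmt6_general F hmono hhom z r hle
end
end

section
/- Let F be an order-preserving, additively homogeneous, and diagonal free self-map of Tⁿ, let z ∈ ℝⁿ and r ∈ ℝ, r ≥ 0. If every x ∈ ℝⁿ with ‖x − z‖_H ≤ r satisfies x ≤ F(x) in Tⁿ (i.e., the Hilbert ball B_H(z, r) is contained in S(F) := { x ∈ Tⁿ : x ≤ F(x) }), then r ≤ min_i ( F(z)_i − z_i ). -/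
noncomputable section

variable {n : ℕ}

/-- `F` is diagonal free: `F(x)_i` does not depend on `x_i` (on real vectors). -/
def DiagFree (F : (Fin n → WithBot ℝ) → (Fin n → WithBot ℝ)) : Prop :=
  ∀ (i : Fin n) (x y : Fin n → ℝ), (∀ j, j ≠ i → x j = y j) →
    F (toT x) i = F (toT y) i

/-- If `F` is diagonal free and the Hilbert ball `B_H(z, r)` is contained in
`S(F) = { x : x ≤ F(x) }`, then `r ≤ min_i (F(z)_i - z_i)`. -/
theorem stmt7 (F : (Fin n → WithBot ℝ) → (Fin n → WithBot ℝ))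
    (hmono : OrdPres F) (hhom : AddHomog F) (hdf : DiagFree F)
    (z : Fin n → ℝ) (r : ℝ) (hr : 0 ≤ r)
    (hball : ∀ x : Fin n → ℝ, hnorm (x - z) ≤ r → toT x ≤ F (toT x)) :
    ∀ i, ((r + z i : ℝ) : WithBot ℝ) ≤ F (toT z) i := by
  intro i
  haveI : Nonempty (Fin n) := ⟨i⟩
  set y : Fin n → ℝ := Function.update z i (z i + r) with hy
  have hval : ∀ j, (y - z) j = if j = i then r else 0 := by
    intro j
    by_cases h : j = i
    · subst h; simp [hy, Function.update_self]
    · simp [hy, Function.update_of_ne h, h]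
  have hnorm_le : hnorm (y - z) ≤ r := by
    have hsup : (⨆ j, (y - z) j) ≤ r := by
      apply ciSup_le
      intro j
      rw [hval j]
      split <;> simp [hr]
    have hinf : (0 : ℝ) ≤ ⨅ j, (y - z) j := by
      apply le_ciInf
      intro j
      rw [hval j]
      split <;> simp [hr]
    have := sub_le_sub hsup hinf
    simpa [hnorm] using this
  have h1 := hball y hnorm_le i
  have h2 : F (toT y) i = F (toT z) i := by
    apply hdf i y z
    intro j hj
    simp [hy, Function.update_of_ne hj]
  rw [h2] at h1
  have h3 : toT y i = ((r + z i : ℝ) : WithBot ℝ) := by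
    simp [toT, hy, Function.update_self, add_comm]
  rwa [h3] at h1
end
end

section
/- Let F : ℝⁿ → ℝⁿ be order-preserving and additively homogeneous, and suppose F(v) = λ + v for some v ∈ ℝⁿ and λ ∈ ℝ with λ ≠ 0. If λ > 0, then: (a) for every natural number k, max_j F^k(0)_j ≥ 0; and (b) for every natural number k with k ≥ ‖v‖_H / λ, min_j F^k(0)_j ≥ 0. Symmetrically, if λ < 0, then for every k, min_j F^k(0)_j ≤ 0, and for every k ≥ ‖v‖_H / (−λ), max_j F^k(0)_j ≤ 0. (Consequently, the value iteration algorithm, which iterates u ↦ F(u) from u = 0 until max_j u_j ≤ 0 or min_j u_j ≥ 0, terminates after at most R(F)·cond(F) iterations, where cond(F) = |λ|⁻¹ and R(F) is the minimal Hilbert seminorm of a bias vector, and returns the correct answer.) -/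
noncomputable section

variable {n : ℕ}

/-- Universal complexity bound for value iteration: if `F(v) = λ + v` with `λ ≠ 0`, then
value iteration terminates after at most `‖v‖_H / |λ|` iterations and returns the correct
answer.  Concretely: if `λ > 0`, then `max_j F^k(0)_j ≥ 0` for every `k`, and
`min_j F^k(0)_j ≥ 0` for every `k ≥ ‖v‖_H / λ`; symmetrically for `λ < 0`. -/
theorem stmt9 (F : (Fin n → ℝ) → (Fin n → ℝ))
    (hmono : ∀ x y, x ≤ y → F x ≤ F y)
    (hhom : ∀ (c : ℝ) (x : Fin n → ℝ), F (fun i => c + x i) = fun i => c + F x i)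
    (v : Fin n → ℝ) (lam : ℝ) (hlam : lam ≠ 0)
    (hbias : F v = fun i => lam + v i) :
    (0 < lam →
      (∀ k : ℕ, 0 ≤ ⨆ j, F^[k] 0 j) ∧
      (∀ k : ℕ, hnorm v / lam ≤ (k : ℝ) → 0 ≤ ⨅ j, F^[k] 0 j)) ∧
    (lam < 0 →
      (∀ k : ℕ, (⨅ j, F^[k] 0 j) ≤ 0) ∧
      (∀ k : ℕ, hnorm v / (-lam) ≤ (k : ℝ) → (⨆ j, F^[k] 0 j) ≤ 0)) := by
  have hmonoF : Monotone F := fun x y h => hmono x y h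
  have hiter_hom : ∀ (k : ℕ) (c : ℝ) (x : Fin n → ℝ),
      F^[k] (fun i => c + x i) = fun i => c + F^[k] x i := by
    intro k
    induction k with
    | zero => intro c x; simp
    | succ k ih =>
      intro c x
      rw [Function.iterate_succ_apply', ih, hhom, Function.iterate_succ_apply']
  have hiter_v : ∀ k : ℕ, F^[k] v = fun i => (k : ℝ) * lam + v i := by
    intro k
    induction k with
    | zero => simp
    | succ k ih =>
      rw [Function.iterate_succ_apply', ih, hhom, hbias]
      funext i
      push_cast
      ring
  rcases Nat.eq_zero_or_pos n with hn | hn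
  · subst hn
    haveI : IsEmpty (Fin 0) := Fin.isEmpty
    simp [Real.iSup_of_isEmpty, Real.iInf_of_isEmpty]
  haveI : Nonempty (Fin n) := Fin.pos_iff_nonempty.mp hn
  set M := ⨆ i, v i with hM
  set m := ⨅ i, v i with hm
  have hvM : ∀ i, v i ≤ M := fun i => le_ciSup (Finite.bddAbove_range v) i
  have hmv : ∀ i, m ≤ v i := fun i => ciInf_le (Finite.bddBelow_range v) i
  have hmM : m ≤ M := le_trans (hmv (Classical.arbitrary _)) (hvM _)
  have hlow : ∀ (k : ℕ) (i : Fin n), -M + ((k : ℝ) * lam + v i) ≤ F^[k] 0 i := by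
    intro k i
    have h1 : (fun i => -M + v i) ≤ (0 : Fin n → ℝ) := fun i => by
      have := hvM i; simp; linarith
    have h2 := hmonoF.iterate k h1
    rw [hiter_hom k (-M) v, hiter_v k] at h2
    exact h2 i
  have hup : ∀ (k : ℕ) (i : Fin n), F^[k] 0 i ≤ -m + ((k : ℝ) * lam + v i) := by
    intro k i
    have h1 : (0 : Fin n → ℝ) ≤ fun i => -m + v i := fun i => by
      have := hmv i; simp; linarith
    have h2 := hmonoF.iterate k h1
    rw [hiter_hom k (-m) v, hiter_v k] at h2
    exact h2 i
  have hnv : hnorm v = M - m := rfl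
  constructor
  · intro hpos
    constructor
    · intro k
      obtain ⟨j, hj⟩ := Finite.exists_max v
      have hMj : M ≤ v j := ciSup_le hj
      have h1 : (0 : ℝ) ≤ F^[k] 0 j := by
        have := hlow k j
        have hk : (0 : ℝ) ≤ (k : ℝ) * lam := mul_nonneg (Nat.cast_nonneg k) hpos.le
        linarith
      exact le_trans h1 (le_ciSup (Finite.bddAbove_range _) j)
    · intro k hk
      have hk' : hnorm v ≤ (k : ℝ) * lam := by
        rw [div_le_iff₀ hpos] at hk; linarith
      apply le_ciInf
      intro j
      have := hlow k j
      have := hmv j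
      rw [hnv] at hk'
      linarith
  · intro hneg
    constructor
    · intro k
      obtain ⟨j, hj⟩ := Finite.exists_min v
      have hjm : v j ≤ m := le_ciInf hj
      have h1 : F^[k] 0 j ≤ 0 := by
        have := hup k j
        have hk : (k : ℝ) * lam ≤ 0 := mul_nonpos_of_nonneg_of_nonpos (Nat.cast_nonneg k) hneg.le
        linarith
      exact le_trans (ciInf_le (Finite.bddBelow_range _) j) h1
    · intro k hk
      have hk' : hnorm v ≤ (k : ℝ) * (-lam) := by
        rw [div_le_iff₀ (by linarith)] at hk; linarith
      apply ciSup_le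
      intro j
      have := hup k j
      have := hvM j
      rw [hnv] at hk'
      linarith
end
end

section
/- Consider a Markov chain with n states whose transition matrix P has rational entries with denominators dividing a positive integer M, and which is irreducible (for all states i, j there exists s ≥ 1 with (P^s)_{ij} > 0). Let k ≤ n be the number of states having at least two possible successors (i.e., indices i such that P_{ij} > 0 for at least two distinct j). If π ∈ ℚⁿ is the invariant measure of the chain, i.e., π_j ≥ 0 for all j, Σ_j π_j = 1, and Σ_i π_i P_{ij} = π_j for all j, then the least common multiple of the denominators of the rational numbers π_1, …, π_n (written in lowest terms) is at most n · M^{min(k, n−1)}. -/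
/-!
Let `A = 1 - P`. Since `P` is stochastic, `det A = 0`, so `adj A * A = A * adj A = 0`: the rows
of `adj A` are invariant vectors and its columns are harmonic, hence constant by irreducibility.
Therefore the diagonal `d` of `adj A` is an invariant vector, and by uniqueness of the invariant
measure `π = d / ∑ d`. Each `d j` is the principal minor `det (1 - Q)` with `Q` the substochastic
matrix obtained by deleting state `j`, so `0 ≤ d j ≤ 1` (induction by Schur complements), and
`d j ≠ 0` because `π j > 0`. In the Leibniz expansion of `det (1 - Q)`, only rows of states with
at least two successors can carry a denominator, each dividing `M`, and there are at most
`min k (n - 1)` of them. So `(∑ d) * M ^ min k (n - 1)` is a positive integer, at most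
`n * M ^ min k (n - 1)`, clearing all denominators of `π`.
-/

open Classical
open Matrix Finset

namespace Rat

lemma mul_mem_bot_of_den_dvd {q : ℚ} {M : ℕ} (h : q.den ∣ M) : q * M ∈ (⊥ : Subring ℚ) := by
  obtain ⟨c, rfl⟩ := h
  refine Subring.mem_bot.mpr ⟨q.num * c, ?_⟩
  push_cast
  rw [← Rat.mul_den_eq_num]
  ring

lemma den_dvd_of_mul_mem_bot {q : ℚ} {N : ℕ} (h : q * N ∈ (⊥ : Subring ℚ)) : q.den ∣ N := by
  rcases eq_or_ne N 0 with rfl | hN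
  · exact dvd_zero _
  obtain ⟨z, hz⟩ := Subring.mem_bot.mp h
  have hq : q = Rat.divInt z N := by
    rw [Rat.divInt_eq_div, hz, Int.cast_natCast]
    field_simp
  exact_mod_cast hq ▸ Rat.den_dvd z N

lemma lcm_den_le_of_mul_mem_bot {ι : Type*} [Fintype ι] (q : ι → ℚ) {N : ℚ} {B : ℕ}
    (hN : N ∈ (⊥ : Subring ℚ)) (hN₀ : 0 < N) (hNB : N ≤ B)
    (hq : ∀ j, q j * N ∈ (⊥ : Subring ℚ)) : univ.lcm (fun j => (q j).den) ≤ B := by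
  obtain ⟨z, rfl⟩ := Subring.mem_bot.mp hN
  lift z to ℕ using by exact_mod_cast hN₀.le
  push_cast at hN₀ hNB hq
  exact (Nat.le_of_dvd (by exact_mod_cast hN₀)
    (Finset.lcm_dvd fun j _ => den_dvd_of_mul_mem_bot (hq j))).trans (by exact_mod_cast hNB)

end Rat

namespace Matrix

lemma pow_mulVec_of_mulVec_eq_self {α ι : Type*} [Semiring α] [Fintype ι] [DecidableEq ι]
    {A : Matrix ι ι α} {y : ι → α} (hy : A *ᵥ y = y) (s : ℕ) : A ^ s *ᵥ y = y := by
  induction s with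
  | zero => simp
  | succ s ih => rw [pow_succ, ← mulVec_mulVec, hy, ih]

/-- Each Leibniz term takes exactly one entry from each row of `T`. -/
lemma det_mul_pow_card_mem {α κ : Type*} [CommRing α] [Fintype κ] [DecidableEq κ]
    (S : Subring α) (C : Matrix κ κ α) (a : α) (T : Finset κ) (ha : ∀ i j, C i j * a ∈ S)
    (hT : ∀ i ∉ T, ∀ j, C i j ∈ S) : C.det * a ^ #T ∈ S := by
  rw [← det_transpose, det_apply', sum_mul]
  refine S.sum_mem fun σ _ => ?_
  have hsplit : (∏ i, Cᵀ (σ i) i) * a ^ #T =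
      (∏ i ∈ T, C i (σ i) * a) * ∏ i ∈ Tᶜ, C i (σ i) := by
    rw [prod_mul_distrib, prod_const, ← prod_mul_prod_compl T]
    simp only [transpose_apply]
    ring
  rw [mul_assoc, hsplit]
  exact S.mul_mem (intCast_mem S _) (S.mul_mem (S.prod_mem fun i _ => ha i _)
    (S.prod_mem fun i hi => hT i (mem_compl.mp hi) _))

lemma det_eq_mul_det_schur {α : Type*} [Field α] {m : ℕ}
    (B : Matrix (Fin (m + 1)) (Fin (m + 1)) α) (hB : B (Fin.last m) (Fin.last m) ≠ 0) :
    B.det = B (Fin.last m) (Fin.last m) * det (of fun i j : Fin m => B i.castSucc j.castSucc -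
      B i.castSucc (Fin.last m) * B (Fin.last m) j.castSucc / B (Fin.last m) (Fin.last m)) := by
  set p := B (Fin.last m) (Fin.last m)
  let D : Matrix (Fin 1) (Fin 1) α := of fun _ _ => p
  have : Invertible D := invertibleOfIsUnitDet D (by simpa [D] using hB)
  have hblocks : B.submatrix finSumFinEquiv finSumFinEquiv =
      fromBlocks (of fun i j : Fin m => B i.castSucc j.castSucc)
        (of fun i _ => B i.castSucc (Fin.last m)) (of fun _ j => B (Fin.last m) j.castSucc) D := by
    ext (i | i) (j | j) <;> simp [D, Fin.fin_one_eq_zero] <;> rfl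
  rw [← det_submatrix_equiv_self finSumFinEquiv, hblocks, det_fromBlocks₂₂]
  have hinv : ⅟D = of fun _ _ => p⁻¹ := invOf_eq_right_inv (by
    ext i j
    rw [Subsingleton.elim i j]
    simp [D, mul_apply, hB])
  rw [hinv, det_fin_one]
  refine congrArg (p * ·) (congrArg det ?_)
  ext i j
  simp [mul_apply]
  ring

lemma adjugate_one_sub_apply_self {α : Type*} [CommRing α] {n : ℕ}
    (P : Matrix (Fin (n + 1)) (Fin (n + 1)) α) (j : Fin (n + 1)) :
    (1 - P).adjugate j j = det (1 - P.submatrix j.succAbove j.succAbove) := by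
  rw [adjugate_fin_succ_eq_det_submatrix, Even.neg_one_pow ⟨j, rfl⟩, one_mul]
  congr 1
  ext a b
  simp [one_apply]

variable {R : Type*} [Field R] [LinearOrder R] [IsStrictOrderedRing R]

section Stochastic

variable {ι : Type*} [Fintype ι] [DecidableEq ι] {P : Matrix ι ι R}

lemma apply_eq_zero_of_mulVec_eq_self {A : Matrix ι ι R} (hA : ∀ i j, 0 ≤ A i j) {y : ι → R}
    (hy : 0 ≤ y) (hAy : A *ᵥ y = y) {i j : ι} {s : ℕ} (hs : 0 < (A ^ s) i j) (hyi : y i = 0) :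
    y j = 0 := by
  have hle : (A ^ s) i j * y j ≤ y i := calc
    (A ^ s) i j * y j ≤ (A ^ s *ᵥ y) i :=
      single_le_sum (f := fun l => (A ^ s) i l * y l)
        (fun l _ => mul_nonneg (pow_apply_nonneg hA s i l) (hy l)) (mem_univ j)
    _ = y i := by rw [pow_mulVec_of_mulVec_eq_self hAy s]
  rw [hyi] at hle
  exact le_antisymm (nonpos_of_mul_nonpos_right hle hs) (hy j)

lemma apply_eq_of_mulVec_eq_self (hP : P ∈ rowStochastic R ι)
    (hirr : ∀ i j, ∃ s, 0 < (P ^ s) i j) {r : ι → R} (hr : P *ᵥ r = r) (i j : ι) :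
    r i = r j := by
  have : Nonempty ι := ⟨i⟩
  obtain ⟨i₀, -, hi₀⟩ := exists_min_image univ r univ_nonempty
  have hy : P *ᵥ (r - r i₀ • 1) = r - r i₀ • 1 := by
    rw [mulVec_sub, mulVec_smul, one_vecMul_of_mem_rowStochastic hP, hr]
  have hmin : ∀ j, r j = r i₀ := fun j => by
    obtain ⟨s, hs⟩ := hirr i₀ j
    have := apply_eq_zero_of_mulVec_eq_self (fun _ _ => nonneg_of_mem_rowStochastic hP)
      (fun l => by simpa using hi₀ l (mem_univ l)) hy hs (by simp)
    simpa [sub_eq_zero] using this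
  rw [hmin i, hmin j]

lemma apply_eq_zero_of_vecMul_eq_self (hP : ∀ i j, 0 ≤ P i j)
    (hirr : ∀ i j, ∃ s, 0 < (P ^ s) i j) {x : ι → R} (hx : 0 ≤ x) (hxP : x ᵥ* P = x)
    {j : ι} (hxj : x j = 0) (i : ι) : x i = 0 := by
  obtain ⟨s, hs⟩ := hirr i j
  refine apply_eq_zero_of_mulVec_eq_self (A := Pᵀ) (fun i j => hP j i) hx
    (by rwa [mulVec_transpose]) (s := s) ?_ hxj
  rwa [← transpose_pow]

lemma pos_of_vecMul_eq_self (hP : ∀ i j, 0 ≤ P i j) (hirr : ∀ i j, ∃ s, 0 < (P ^ s) i j)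
    {π : ι → R} (hπ : 0 ≤ π) (hπP : π ᵥ* P = π) (hπ₀ : π ≠ 0) (j : ι) : 0 < π j :=
  (hπ j).lt_of_ne fun h =>
    hπ₀ (funext fun i => apply_eq_zero_of_vecMul_eq_self hP hirr hπ hπP h.symm i)

lemma eq_sum_smul_of_vecMul_eq_self (hP : ∀ i j, 0 ≤ P i j)
    (hirr : ∀ i j, ∃ s, 0 < (P ^ s) i j) {π : ι → R} (hπ : 0 ≤ π) (hπP : π ᵥ* P = π)
    (hπ₁ : ∑ i, π i = 1) {x : ι → R} (hxP : x ᵥ* P = x) : x = (∑ i, x i) • π := by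
  have hπ₀ : π ≠ 0 := by rintro rfl; simp at hπ₁
  have hpos := pos_of_vecMul_eq_self hP hirr hπ hπP hπ₀
  have : Nonempty ι := by
    by_contra h
    rw [not_nonempty_iff] at h
    simp at hπ₁
  obtain ⟨i₀, -, hi₀⟩ := exists_min_image univ (fun i => x i / π i) univ_nonempty
  set c := x i₀ / π i₀
  -- `c` is the least ratio `x i / π i`: `x - c • π` is invariant, nonnegative, zero at `i₀`
  have hz : x - c • π = 0 := by
    funext i
    refine apply_eq_zero_of_vecMul_eq_self hP hirr (j := i₀) (fun l => ?_) ?_ ?_ i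
    · simpa using (le_div_iff₀ (hpos l)).mp (hi₀ l (mem_univ l))
    · rw [sub_vecMul, smul_vecMul, hxP, hπP]
    · simp [c, div_mul_cancel₀ _ (hpos i₀).ne']
  rw [sub_eq_zero.mp hz]
  simp [← mul_sum, hπ₁]

lemma vecMul_eq_self_of_forall_ne (hP : P ∈ rowStochastic R ι) {w : ι → R} (j : ι)
    (h : ∀ c ≠ j, (w ᵥ* P) c = w c) : w ᵥ* P = w := by
  have hmass : ∑ c, (w ᵥ* P) c = ∑ c, w c := by
    rw [← dotProduct_one, ← dotProduct_one, ← dotProduct_mulVec,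
      one_vecMul_of_mem_rowStochastic hP]
  rw [Fintype.sum_eq_add_sum_compl j, Fintype.sum_eq_add_sum_compl j (f := w),
    sum_congr rfl fun c hc => h c (by simpa using hc)] at hmass
  funext c
  by_cases hc : c = j
  · subst hc
    exact add_right_cancel hmass
  · exact h c hc

lemma det_one_sub_eq_zero [Nonempty ι] (hP : P ∈ rowStochastic R ι) : det (1 - P) = 0 := by
  rw [← exists_mulVec_eq_zero_iff]
  exact ⟨1, one_ne_zero, by
    rw [sub_mulVec, one_mulVec, one_vecMul_of_mem_rowStochastic hP, sub_self]⟩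

lemma diag_adjugate_one_sub_vecMul (hP : P ∈ rowStochastic R ι)
    (hirr : ∀ i j, ∃ s, 0 < (P ^ s) i j) :
    (1 - P).adjugate.diag ᵥ* P = (1 - P).adjugate.diag := by
  cases isEmpty_or_nonempty ι
  · exact Subsingleton.elim _ _
  set A := (1 - P).adjugate
  have hAP : A * P = A := by
    have := adjugate_mul (1 - P)
    rwa [det_one_sub_eq_zero hP, zero_smul, mul_sub, mul_one, sub_eq_zero, eq_comm] at this
  have hPA : P * A = A := by
    have := mul_adjugate (1 - P)
    rwa [det_one_sub_eq_zero hP, zero_smul, sub_mul, one_mul, sub_eq_zero, eq_comm] at this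
  have hrow : ∀ i, A i ᵥ* P = A i := fun i => funext fun j => congrFun (congrFun hAP i) j
  have hcol : ∀ j, P *ᵥ (fun i => A i j) = fun i => A i j := fun j =>
    funext fun i => congrFun (congrFun hPA i) j
  obtain ⟨i₀⟩ := ‹Nonempty ι›
  have hdiag : A.diag = A i₀ := funext fun j => apply_eq_of_mulVec_eq_self hP hirr (hcol j) j i₀
  rw [hdiag, hrow]

def successors (P : Matrix ι ι R) (i : ι) : Finset ι := {j | 0 < P i j}

def branchingStates (P : Matrix ι ι R) : Finset ι := {i | 1 < #(P.successors i)}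

lemma apply_eq_zero_or_eq_one_of_card_successors_le_one (hP : P ∈ rowStochastic R ι) {i : ι}
    (hi : #(P.successors i) ≤ 1) (j : ι) : P i j = 0 ∨ P i j = 1 := by
  rcases (nonneg_of_mem_rowStochastic hP (i := i) (j := j)).eq_or_lt with h | h
  · exact Or.inl h.symm
  · have hj : j ∈ P.successors i := by simp [successors, h]
    refine Or.inr ((Fintype.sum_eq_single j fun k hkj => ?_).symm.trans
      (sum_row_of_mem_rowStochastic hP i))
    by_contra hne
    have hk : k ∈ P.successors i := by
      simp [successors, (nonneg_of_mem_rowStochastic hP).lt_of_ne' hne]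
    exact hkj (card_le_one.mp hi k hk j hj)

lemma det_one_sub_eq_zero_of_apply_self_eq_one {Q : Matrix ι ι R} (hQ : ∀ i j, 0 ≤ Q i j)
    (hQ₁ : ∀ i, ∑ j, Q i j ≤ 1) {i : ι} (hi : Q i i = 1) : det (1 - Q) = 0 := by
  refine det_eq_zero_of_row_eq_zero i fun j => ?_
  rcases eq_or_ne j i with rfl | hj
  · simp [hi]
  · have : Q i i + Q i j ≤ 1 := (sum_pair hj.symm).symm.le.trans
      ((sum_le_sum_of_subset_of_nonneg (subset_univ _) fun k _ _ => hQ i k).trans (hQ₁ i))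
    simp [one_apply_ne hj.symm, le_antisymm (by linarith) (hQ i j)]

end Stochastic

lemma det_one_sub_mem_Icc {m : ℕ} (Q : Matrix (Fin m) (Fin m) R) (hQ : ∀ i j, 0 ≤ Q i j)
    (hQ₁ : ∀ i, ∑ j, Q i j ≤ 1) : det (1 - Q) ∈ Set.Icc 0 1 := by
  induction m with
  | zero => simp
  | succ m ih =>
    set L := Fin.last m
    have hrow : ∀ i, ∑ j : Fin m, Q i j.castSucc ≤ 1 - Q i L := fun i => by
      have := hQ₁ i
      rw [Fin.sum_univ_castSucc] at this
      linarith
    have hLL : Q L L ≤ 1 := by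
      linarith [hrow L, sum_nonneg fun (j : Fin m) (_ : j ∈ univ) => hQ L j.castSucc]
    rcases hLL.lt_or_eq with hlt | heq
    swap
    · simp [det_one_sub_eq_zero_of_apply_self_eq_one hQ hQ₁ heq]
    set p := 1 - Q L L
    have hp : 0 < p := sub_pos.mpr hlt
    set Q' : Matrix (Fin m) (Fin m) R :=
      of fun i j => Q i.castSucc j.castSucc + Q i.castSucc L * Q L j.castSucc / p
    have hdet : det (1 - Q) = p * det (1 - Q') := by
      rw [det_eq_mul_det_schur _ (by simpa [one_apply] using hp.ne')]
      congr 2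
      · simp [p, L]
      · ext i j
        simp [one_apply, Q', p, L, Fin.castSucc_ne_last, (Fin.castSucc_ne_last _).symm]
        ring
    have hQ' : ∀ i j, 0 ≤ Q' i j := fun i j =>
      add_nonneg (hQ _ _) (div_nonneg (mul_nonneg (hQ _ _) (hQ _ _)) hp.le)
    have hQ'₁ : ∀ i, ∑ j, Q' i j ≤ 1 := fun i => calc
      ∑ j, Q' i j = ∑ j : Fin m, Q i.castSucc j.castSucc +
          Q i.castSucc L * (∑ j : Fin m, Q L j.castSucc) / p := by
        simp only [Q', of_apply, sum_add_distrib, mul_sum, sum_div]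
      _ ≤ (1 - Q i.castSucc L) + Q i.castSucc L * p / p := by
        gcongr
        · exact hrow _
        · exact hQ _ _
        · exact hrow L
      _ = 1 := by field_simp; ring
    obtain ⟨h₀, h₁⟩ := ih Q' hQ' hQ'₁
    rw [hdet]
    exact ⟨mul_nonneg hp.le h₀, mul_le_one₀ (by linarith [hQ L L]) h₀ h₁⟩

section PrincipalMinors

variable {n : ℕ} {P : Matrix (Fin (n + 1)) (Fin (n + 1)) R}

lemma adjugate_one_sub_apply_self_mem_Icc (hP : P ∈ rowStochastic R _) (j : Fin (n + 1)) :
    (1 - P).adjugate j j ∈ Set.Icc 0 1 := by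
  rw [adjugate_one_sub_apply_self]
  refine det_one_sub_mem_Icc _ (fun _ _ => nonneg_of_mem_rowStochastic hP) fun i => ?_
  have := sum_row_of_mem_rowStochastic hP (j.succAbove i)
  rw [Fin.sum_univ_succAbove _ j] at this
  simpa using this ▸ le_add_of_nonneg_left (nonneg_of_mem_rowStochastic hP)

lemma adjugate_one_sub_apply_self_ne_zero (hP : P ∈ rowStochastic R _)
    (hirr : ∀ i j, ∃ s, 0 < (P ^ s) i j) {π : Fin (n + 1) → R} (hπ : 0 ≤ π)
    (hπP : π ᵥ* P = π) (hπ₁ : ∑ i, π i = 1) (j : Fin (n + 1)) :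
    (1 - P).adjugate j j ≠ 0 := by
  rw [adjugate_one_sub_apply_self]
  intro h
  obtain ⟨v, hv, hvQ⟩ := exists_vecMul_eq_zero_iff.mpr h
  rw [vecMul_sub, vecMul_one, sub_eq_zero, eq_comm] at hvQ
  -- extending `v` by `0` at `j` gives an invariant vector of `P`
  set w : Fin (n + 1) → R := Fin.insertNth j 0 v
  have hw : w ᵥ* P = w := vecMul_eq_self_of_forall_ne hP j fun c hc => by
    obtain ⟨c, rfl⟩ := Fin.exists_succAbove_eq hc
    rw [vecMul, dotProduct, Fin.sum_univ_succAbove _ j]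
    simpa [w, vecMul, dotProduct] using congrFun hvQ c
  have hw₀ : w = 0 := by
    have hwπ := eq_sum_smul_of_vecMul_eq_self hP.1 hirr hπ hπP hπ₁ hw
    have hπj := pos_of_vecMul_eq_self hP.1 hirr hπ hπP (by rintro rfl; simp at hπ₁) j
    have hsum : ∑ i, w i = 0 := by
      simpa [w, hπj.ne'] using (congrFun hwπ j).symm
    rw [hwπ, hsum, zero_smul]
  exact hv (funext fun c => by simpa [w] using congrFun hw₀ (j.succAbove c))

end PrincipalMinors

lemma adjugate_one_sub_apply_self_mul_pow_mem {n M : ℕ}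
    {P : Matrix (Fin (n + 1)) (Fin (n + 1)) ℚ} (hP : P ∈ rowStochastic ℚ _)
    (hden : ∀ i j, (P i j).den ∣ M) (j : Fin (n + 1)) :
    (1 - P).adjugate j j * (M : ℚ) ^ min #P.branchingStates n ∈ (⊥ : Subring ℚ) := by
  set T : Finset (Fin n) := {r | j.succAbove r ∈ P.branchingStates}
  have hT : #T ≤ min #P.branchingStates n := le_min
    (card_le_card_of_injOn _ (fun r hr => by simpa [T] using hr)
      Fin.succAbove_right_injective.injOn)
    (card_le_univ T |>.trans_eq (Fintype.card_fin n))
  have hone : ∀ r c, (1 : Matrix (Fin n) (Fin n) ℚ) r c ∈ (⊥ : Subring ℚ) := fun r c => by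
    rw [one_apply]
    split_ifs
    exacts [one_mem _, zero_mem _]
  rw [adjugate_one_sub_apply_self, ← pow_mul_pow_sub _ hT, ← mul_assoc]
  refine Subring.mul_mem _ (det_mul_pow_card_mem ⊥ _ _ T (fun r c => ?_) fun r hr c => ?_)
    (pow_mem (by simp) _)
  · rw [sub_apply, sub_mul]
    exact Subring.sub_mem _ (Subring.mul_mem _ (hone r c) (by simp))
      (Rat.mul_mem_bot_of_den_dvd (hden _ _))
  · have hr' : #(P.successors (j.succAbove r)) ≤ 1 := by
      simpa [T, branchingStates] using hr
    rw [sub_apply, submatrix_apply]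
    rcases apply_eq_zero_or_eq_one_of_card_successors_le_one hP hr' (j.succAbove c)
      with h | h <;> rw [h]
    · simpa using hone r c
    · exact Subring.sub_mem _ (hone r c) (one_mem _)

end Matrix

/-- Bound on the common denominator of the invariant measure of an irreducible Markov chain
with `n` states whose transition probabilities are rational with denominators dividing `M`:
if `k` is the number of states with at least two possible successors, then the least common
multiple of the denominators of the entries of the invariant measure is at most
`n * M ^ min k (n-1)`. -/
theorem stmt10 {n M : ℕ} (hn : 0 < n) (hM : 1 ≤ M)
    (P : Matrix (Fin n) (Fin n) ℚ)
    (hPnn : ∀ i j, 0 ≤ P i j)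
    (hPsum : ∀ i, ∑ j, P i j = 1)
    (hden : ∀ i j, (P i j).den ∣ M)
    (hirr : ∀ i j, ∃ s : ℕ, 1 ≤ s ∧ 0 < (P ^ s) i j)
    (π : Fin n → ℚ)
    (hπnn : ∀ j, 0 ≤ π j)
    (hπsum : ∑ j, π j = 1)
    (hπstat : ∀ j, ∑ i, π i * P i j = π j) :
    Finset.univ.lcm (fun j => (π j).den) ≤
      n * M ^ (min ((Finset.univ.filter fun i =>
          1 < (Finset.univ.filter fun j => 0 < P i j).card).card) (n - 1)) := by
  obtain ⟨n, rfl⟩ : ∃ n', n = n' + 1 := ⟨n - 1, by omega⟩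
  rw [Nat.add_sub_cancel]
  change univ.lcm _ ≤ (n + 1) * M ^ min #P.branchingStates n
  have hP : P ∈ rowStochastic ℚ _ := mem_rowStochastic_iff_sum.mpr ⟨hPnn, hPsum⟩
  have hirr' : ∀ i j, ∃ s, 0 < (P ^ s) i j := fun i j => (hirr i j).imp fun _ => And.right
  have hπP : π ᵥ* P = π := funext hπstat
  set d := (1 - P).adjugate.diag
  have hdπ : d = (∑ j, d j) • π := eq_sum_smul_of_vecMul_eq_self hPnn hirr' hπnn hπP hπsum
    (diag_adjugate_one_sub_vecMul hP hirr')
  have hd := adjugate_one_sub_apply_self_mem_Icc hP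
  have hd₀ : d 0 ≠ 0 := adjugate_one_sub_apply_self_ne_zero hP hirr' hπnn hπP hπsum 0
  have hsum : 0 < ∑ j, d j := (sum_nonneg fun j _ => (hd j).1 : 0 ≤ ∑ j, d j).lt_of_ne
    fun h => hd₀ (by rw [hdπ, Pi.smul_apply, ← h, zero_smul])
  refine Rat.lcm_den_le_of_mul_mem_bot π (N := (∑ j, d j) * M ^ min #P.branchingStates n)
    ?_ ?_ ?_ fun j => ?_
  · rw [sum_mul]
    exact Subring.sum_mem _ fun j _ => adjugate_one_sub_apply_self_mul_pow_mem hP hden j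
  · have : (0 : ℚ) < M := by exact_mod_cast hM
    positivity
  · push_cast
    gcongr
    calc ∑ j, d j ≤ ∑ _j : Fin (n + 1), (1 : ℚ) := sum_le_sum fun j _ => (hd j).2
      _ = n + 1 := by simp
  · have hj : d j = (∑ j, d j) * π j := congrFun hdπ j
    rw [← mul_assoc, mul_comm (π j), ← hj]
    exact adjugate_one_sub_apply_self_mul_pow_mem hP hden j
end

section
/- Let F : ℝⁿ → ℝⁿ be the Shapley operator associated with matrices A ∈ T^{m×n}, B ∈ T^{m×q} whose finite entries are integers (every column of A and every row of B having at least one finite entry) and a row-stochastic matrix P with rational entries P_{kl} = Q_{kl}/M for a common denominator M ∈ ℕ, M ≥ 1 and nonnegative integers Q_{kl}. Let k be the number of nondeterministic states, i.e., indices i ∈ {1,…,q} such that P_{il} > 0 for at least two distinct l. Suppose F has a bias vector, i.e., F(v) = ρ + v for some v ∈ ℝⁿ and ρ ∈ ℝ, and that ρ ≠ 0. Then |ρ| ≥ 1 / ( n · M^{min(k, n−1)} ); equivalently, cond(F) := |ρ|⁻¹ ≤ n · M^{min(k, n−1)}. -/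
/-!
Choosing at every column an action that attains the minimum and the maximum in `F v = ρ + v`
turns the bias equation into the equation `ρ + u = γ + T u` of a Markov chain with rewards.
On a closed class of this chain the Markov chain tree theorem provides a stationary vector whose
entries are sums, over spanning arborescences, of products of transition probabilities. Each entry
is at most `1`, and becomes an integer once multiplied by the denominators of the rows along the
arborescence. Averaging the equation against this vector shows that `ρ` times a positive number
at most `n * M ^ E` is a nonzero integer. The chain on the columns gives `E = n - 1`; lumping each
column into the row of `P` it is sent to gives `E = k`, because only nondeterministic rows have a
denominator.
-/


noncomputable section

variable {m n q : ℕ}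

open Classical in
/-- The number of nondeterministic states: indices `k` such that `P_{kl} > 0` for at least
two distinct `l`. -/
def nondetCount (P : Fin q → Fin n → ℝ) : ℕ :=
  (Finset.univ.filter fun k => 1 < (Finset.univ.filter fun l => 0 < P k l).card).card

open Finset Function Relation

section Orbits

variable {α : Type*}

theorem exists_iterate_eq_of_eq_off {f g : α → α} {i : α} (h : ∀ x, x ≠ i → g x = f x) :
    ∀ {t : ℕ} {x : α}, f^[t] x = i → ∃ s, g^[s] x = i := by
  intro t
  induction t with
  | zero => exact fun hx => ⟨0, hx⟩
  | succ t ih =>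
    intro x hx
    by_cases hxi : x = i
    · exact ⟨0, hxi⟩
    · obtain ⟨s, hs⟩ := ih (x := f x) hx
      exact ⟨s + 1, by rwa [iterate_succ_apply, h x hxi]⟩

theorem eq_of_iterate_eq_of_apply_eq {g : α → α} {i i' j : α} {a b : ℕ}
    (ha : g^[a] j = i) (hi : g i = j) (hb : g^[b] j = i') (hi' : g i' = j) : i = i' := by
  -- `j` is periodic with periods `a + 1` and `b + 1`
  have hper : ∀ {c y}, g^[c] j = y → g y = j → ∀ d, g^[c + (c + 1) * d] j = y := by
    intro c y hc hy d
    have hfix : g^[c + 1] j = j := by rw [iterate_succ_apply', hc, hy]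
    rw [iterate_add_apply, iterate_mul, iterate_fixed hfix, hc]
  rw [← hper ha hi b, show a + (a + 1) * b = b + (b + 1) * a by ring, hper hb hi' a]

/-- `f` is the parent map of a spanning tree oriented towards its root `r`. -/
def IsArborescence (r : α) (f : α → α) : Prop := f r = r ∧ ∀ x, ∃ t, f^[t] x = r

theorem IsArborescence.exists_iterate_update_eq [DecidableEq α] {r : α} {f : α → α}
    (hf : IsArborescence r f) (y x : α) : ∃ s, (update f r y)^[s] x = r :=
  let ⟨_, ht⟩ := hf.2 x
  exists_iterate_eq_of_eq_off (fun _ hx => update_of_ne hx _ _) ht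

theorem isArborescence_update_self [DecidableEq α] {g : α → α} {r : α}
    (hg : ∀ x, ∃ t, g^[t] x = r) : IsArborescence r (update g r r) :=
  ⟨update_self .., fun x =>
    let ⟨_, ht⟩ := hg x
    exists_iterate_eq_of_eq_off (fun _ hx => update_of_ne hx _ _) ht⟩

def ReachesIn (R : α → α → Prop) (r : α) : ℕ → α → Prop
  | 0, x => x = r
  | t + 1, x => ∃ y, R x y ∧ ReachesIn R r t y

theorem Relation.ReflTransGen.exists_reachesIn {R : α → α → Prop} {x r : α}
    (h : ReflTransGen R x r) : ∃ t, ReachesIn R r t x := by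
  induction h using ReflTransGen.head_induction_on with
  | refl => exact ⟨0, rfl⟩
  | head hxy _ ih =>
    obtain ⟨t, ht⟩ := ih
    exact ⟨t + 1, _, hxy, ht⟩

theorem exists_isArborescence_of_reflTransGen [DecidableEq α] {R : α → α → Prop} {r : α}
    (h : ∀ x, ReflTransGen R x r) :
    ∃ f, IsArborescence r f ∧ ∀ x, x ≠ r → R x (f x) := by
  classical
  have hex : ∀ x, ∃ t, ReachesIn R r t x := fun x => (h x).exists_reachesIn
  -- a breadth-first search tree: every `x ≠ r` points to a successor closer to `r`
  have hstep : ∀ x, x ≠ r → ∃ y, R x y ∧ Nat.find (hex y) < Nat.find (hex x) := by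
    intro x hx
    have hspec := Nat.find_spec (hex x)
    obtain ⟨t, ht⟩ : ∃ t, Nat.find (hex x) = t + 1 :=
      Nat.exists_eq_succ_of_ne_zero fun h0 => hx (by rw [h0] at hspec; exact hspec)
    rw [ht] at hspec ⊢
    obtain ⟨y, hxy, hy⟩ := hspec
    exact ⟨y, hxy, Nat.lt_succ_of_le (Nat.find_min' _ hy)⟩
  choose! next hnext using hstep
  refine ⟨update next r r, ⟨update_self .., fun x => ?_⟩,
    fun x hx => by simpa [update_of_ne hx] using (hnext x hx).1⟩
  induction hk : Nat.find (hex x) using Nat.strong_induction_on generalizing x with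
  | _ k ih =>
    by_cases hx : x = r
    · exact ⟨0, hx⟩
    obtain ⟨t, ht⟩ := ih _ (hk ▸ (hnext x hx).2) (next x) rfl
    exact ⟨t + 1, by rw [iterate_succ_apply, update_of_ne hx, ht]⟩

theorem exists_closed_class [Fintype α] [Nonempty α] (R : α → α → Prop) :
    ∃ C : Finset α, ∃ r ∈ C,
      (∀ x ∈ C, ∀ y, R x y → y ∈ C) ∧ ∀ x ∈ C, ReflTransGen R x r := by
  classical
  let reach (x : α) : Finset α := univ.filter (ReflTransGen R x)
  have hmem : ∀ x y, y ∈ reach x ↔ ReflTransGen R x y := by simp [reach]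
  -- a state whose reachable set is smallest can be reached back from all of it
  obtain ⟨r, -, hmin⟩ := exists_min_image univ (fun x => #(reach x)) univ_nonempty
  refine ⟨reach r, r, (hmem r r).2 .refl,
    fun x hx y hxy => (hmem r y).2 (((hmem r x).1 hx).tail hxy), fun x hx => ?_⟩
  have hsub : reach x ⊆ reach r := fun y hy =>
    (hmem r y).2 (((hmem r x).1 hx).trans ((hmem x y).1 hy))
  rw [← hmem, eq_of_subset_of_card_le hsub (hmin x (mem_univ x))]
  exact (hmem r r).2 .refl

theorem Relation.ReflTransGen.subtype {R : α → α → Prop} {p : α → Prop}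
    (hp : ∀ x, p x → ∀ y, R x y → p y) {a b : α} (h : ReflTransGen R a b)
    (ha : p a) (hb : p b) :
    ReflTransGen (fun x y : Subtype p => R x y) ⟨a, ha⟩ ⟨b, hb⟩ := by
  induction h using ReflTransGen.head_induction_on with
  | refl => rfl
  | head hac _ ih => exact .head hac (ih (hp _ ha _ hac))

end Orbits

section TreeWeight

variable {S : Type*} [Fintype S] [DecidableEq S]

open Classical in
def arborescences (r : S) : Finset (S → S) := univ.filter (IsArborescence r)

open Classical in
/-- The maps whose functional graph is connected with `j` on its unique cycle. -/
def unicyclicThrough (j : S) : Finset (S → S) := univ.filter fun g => ∀ x, ∃ t, g^[t] x = j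

@[simp] theorem mem_arborescences {r : S} {f : S → S} :
    f ∈ arborescences r ↔ IsArborescence r f := by
  simp [arborescences]

@[simp] theorem mem_unicyclicThrough {j : S} {g : S → S} :
    g ∈ unicyclicThrough j ↔ ∀ x, ∃ t, g^[t] x = j := by
  simp [unicyclicThrough]

def treeWeight (T : S → S → ℝ) (r : S) : ℝ :=
  ∑ f ∈ arborescences r, ∏ x ∈ univ.erase r, T x (f x)

theorem prod_apply_update {β : Type*} [CommMonoid β] (T : S → S → β) (f : S → S)
    (i y : S) :
    ∏ x, T x (update f i y x) = (∏ x ∈ univ.erase i, T x (f x)) * T i y := by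
  rw [← prod_erase_mul _ _ (mem_univ i), update_self]
  congr 1
  exact prod_congr rfl fun x hx => by rw [update_of_ne (ne_of_mem_erase hx)]

theorem sum_treeWeight_mul_eq_sum_unicyclicThrough (T : S → S → ℝ) (j : S) :
    ∑ i, treeWeight T i * T i j = ∑ g ∈ unicyclicThrough j, ∏ x, T x (g x) := by
  simp_rw [treeWeight, sum_mul, ← prod_apply_update]
  rw [sum_sigma']
  -- attach the root `i` of an arborescence to `j`; `i` is recovered as the predecessor of `j`
  -- on the cycle
  refine sum_bij (fun p _ => update p.2 p.1 j) ?_ ?_ ?_ fun _ _ => rfl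
  · rintro ⟨i, f⟩ hf
    simp only [mem_sigma, mem_univ, mem_arborescences, true_and] at hf
    refine mem_unicyclicThrough.2 fun x => ?_
    obtain ⟨s, hs⟩ := hf.exists_iterate_update_eq j x
    exact ⟨s + 1, by rw [iterate_succ_apply', hs, update_self]⟩
  · rintro ⟨i, f⟩ hf ⟨i', f'⟩ hf' h
    simp only [mem_sigma, mem_univ, mem_arborescences, true_and] at hf hf' h
    obtain ⟨a, ha⟩ := hf.exists_iterate_update_eq j j
    obtain ⟨b, hb⟩ := hf'.exists_iterate_update_eq j j
    rw [← h] at hb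
    obtain rfl : i = i' :=
      eq_of_iterate_eq_of_apply_eq ha (update_self ..) hb (by rw [h, update_self])
    have hrec : ∀ {f : S → S}, IsArborescence i f → f = update (update f i j) i i :=
      fun hf => by rw [update_idem, update_eq_self_iff.2 hf.1.symm]
    rw [hrec hf, hrec hf', h]
  · intro g hg
    rw [mem_unicyclicThrough] at hg
    obtain ⟨t, ht⟩ := hg (g j)
    have hgi : g (g^[t] j) = j := (iterate_succ_apply' g t j).symm.trans ht
    have hreach : ∀ x, ∃ s, g^[s] x = g^[t] j := fun x =>
      let ⟨s, hs⟩ := hg x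
      ⟨t + s, by rw [iterate_add_apply, hs]⟩
    refine ⟨⟨g^[t] j, update g (g^[t] j) (g^[t] j)⟩,
      by simpa using isArborescence_update_self hreach, ?_⟩
    rw [update_idem, update_eq_self_iff.2 hgi.symm]

theorem treeWeight_eq_sum_unicyclicThrough {T : S → S → ℝ} (hrow : ∀ x, ∑ y, T x y = 1)
    (j : S) : treeWeight T j = ∑ g ∈ unicyclicThrough j, ∏ x, T x (g x) := by
  have hsplit : treeWeight T j =
      ∑ p ∈ arborescences j ×ˢ univ, ∏ x, T x (update p.1 j p.2 x) := by
    simp_rw [sum_product, prod_apply_update, ← mul_sum, hrow, mul_one, treeWeight]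
  rw [hsplit]
  refine sum_nbij' (fun p => update p.1 j p.2) (fun g => (update g j j, g j)) ?_ ?_ ?_ ?_
    fun _ _ => rfl
  · rintro ⟨f, l⟩ hf
    simp only [mem_product, mem_arborescences] at hf
    exact mem_unicyclicThrough.2 (hf.1.exists_iterate_update_eq l)
  · intro g hg
    simpa using isArborescence_update_self (mem_unicyclicThrough.1 hg)
  · rintro ⟨f, l⟩ hf
    simp only [mem_product, mem_arborescences] at hf
    simp only [update_idem, update_self, Prod.mk.injEq, and_true]
    exact update_eq_self_iff.2 hf.1.1.symm
  · intro g _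
    simp [update_idem]

/-- The Markov chain tree theorem. -/
theorem sum_treeWeight_mul {T : S → S → ℝ} (hrow : ∀ x, ∑ y, T x y = 1) (j : S) :
    ∑ i, treeWeight T i * T i j = treeWeight T j := by
  rw [sum_treeWeight_mul_eq_sum_unicyclicThrough, treeWeight_eq_sum_unicyclicThrough hrow]

theorem treeWeight_nonneg {T : S → S → ℝ} (hT0 : ∀ x y, 0 ≤ T x y) (r : S) :
    0 ≤ treeWeight T r :=
  sum_nonneg fun _ _ => prod_nonneg fun _ _ => hT0 _ _

theorem treeWeight_pos {T : S → S → ℝ} (hT0 : ∀ x y, 0 ≤ T x y) {r : S} {f : S → S}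
    (hf : IsArborescence r f) (hpos : ∀ x, x ≠ r → 0 < T x (f x)) : 0 < treeWeight T r :=
  (prod_pos fun x hx => hpos x (ne_of_mem_erase hx)).trans_le <|
    single_le_sum (f := fun f => ∏ x ∈ univ.erase r, T x (f x))
      (fun _ _ => prod_nonneg fun _ _ => hT0 _ _) (mem_arborescences.2 hf)

theorem treeWeight_le_one {T : S → S → ℝ} (hT0 : ∀ x y, 0 ≤ T x y)
    (hrow : ∀ x, ∑ y, T x y = 1) (r : S) : treeWeight T r ≤ 1 := by
  -- making `r` absorbing turns the weight of an arborescence into a product over all states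
  let T' : S → S → ℝ := update T r (Pi.single r 1)
  have hT'0 : ∀ x y, 0 ≤ T' x y := fun x y => by
    by_cases hx : x = r
    · subst hx
      simp only [T', update_self, Pi.single_apply]
      positivity
    · simpa [T', update_of_ne hx] using hT0 x y
  have hT'row : ∀ x, ∑ y, T' x y = 1 := fun x => by
    by_cases hx : x = r
    · subst hx
      simp [T']
    · simpa [T', update_of_ne hx] using hrow x
  calc treeWeight T r = ∑ f ∈ arborescences r, ∏ x, T' x (f x) := by
        refine sum_congr rfl fun f hf => ?_
        rw [← prod_erase_mul _ _ (mem_univ r), (mem_arborescences.1 hf).1]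
        simp only [T', update_self, Pi.single_eq_same, mul_one]
        exact prod_congr rfl fun x hx => by rw [update_of_ne (ne_of_mem_erase hx)]
    _ ≤ ∑ f : S → S, ∏ x, T' x (f x) :=
        sum_le_sum_of_subset_of_nonneg (subset_univ _) fun _ _ _ =>
          prod_nonneg fun _ _ => hT'0 _ _
    _ = ∏ x, ∑ y, T' x y := (Fintype.prod_sum T').symm
    _ = 1 := prod_eq_one fun x _ => hT'row x

theorem treeWeight_mul_mem {T : S → S → ℝ} {d : S → ℕ}
    (hTint : ∀ x y, (d x : ℝ) * T x y ∈ (⊥ : Subring ℝ)) (r : S) :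
    (∏ x ∈ univ.erase r, (d x : ℝ)) * treeWeight T r ∈ (⊥ : Subring ℝ) := by
  rw [treeWeight, mul_sum]
  refine sum_mem fun f _ => ?_
  rw [← prod_mul_distrib]
  exact prod_mem fun x _ => hTint x (f x)

end TreeWeight

section Gain

theorem prod_subtype_dvd_prod {α β : Type*} [CommMonoid β] {p : α → Prop}
    {s : Finset (Subtype p)} {t : Finset α} (h : ∀ x ∈ s, ↑x ∈ t) (f : α → β) :
    ∏ x ∈ s, f x ∣ ∏ x ∈ t, f x :=
  calc ∏ x ∈ s, f x = ∏ x ∈ s.map (Embedding.subtype p), f x :=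
        (prod_map s (Embedding.subtype p) f).symm
    _ ∣ ∏ x ∈ t, f x := prod_dvd_prod_of_subset _ _ _ fun y hy => by
      obtain ⟨x, hx, rfl⟩ := mem_map.1 hy
      exact h x hx

variable {S : Type*} [Fintype S] {T : S → S → ℝ} {u γ : S → ℝ} {ρ : ℝ}

theorem one_div_le_abs_of_mul_mem_bot {K B : ℝ} (hρ : ρ ≠ 0) (hK : 0 < K) (hKB : K ≤ B)
    (hint : ρ * K ∈ (⊥ : Subring ℝ)) : 1 / B ≤ |ρ| := by
  obtain ⟨z, hz⟩ := Subring.mem_bot.1 hint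
  have hz0 : z ≠ 0 := by
    rintro rfl
    exact mul_ne_zero hρ hK.ne' (by rw [← hz, Int.cast_zero])
  have h1 : (1 : ℝ) ≤ |ρ| * K := by
    rw [← abs_of_pos hK, ← abs_mul, ← hz, ← Int.cast_abs]
    exact_mod_cast Int.one_le_abs hz0
  rw [div_le_iff₀ (hK.trans_le hKB)]
  exact h1.trans (mul_le_mul_of_nonneg_left hKB (abs_nonneg ρ))

theorem gain_mul_sum_eq_of_stationary (π : S → ℝ) (hπ : ∀ y, ∑ x, π x * T x y = π y)
    (hbias : ∀ x, ρ + u x = γ x + ∑ y, T x y * u y) :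
    ρ * ∑ x, π x = ∑ x, π x * γ x := by
  have hflow : ∑ x, π x * ∑ y, T x y * u y = ∑ y, π y * u y := by
    simp_rw [mul_sum, ← mul_assoc]
    rw [sum_comm]
    simp_rw [← sum_mul, hπ]
  have h := congrArg (fun w : S → ℝ => ∑ x, π x * w x) (funext hbias)
  simp only [mul_add, sum_add_distrib, hflow, ← sum_mul] at h
  linarith [mul_comm ρ (∑ x, π x)]

variable [DecidableEq S]

theorem one_div_le_abs_gain_of_reflTransGen (N : ℕ) (hN : Fintype.card S ≤ N) (d e : S → ℕ)
    (D : ℕ) {r₀ : S} (hr₀ : ∀ x, ReflTransGen (fun a b => 0 < T a b) x r₀)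
    (hT0 : ∀ x y, 0 ≤ T x y) (hrow : ∀ x, ∑ y, T x y = 1)
    (hTint : ∀ x y, (d x : ℝ) * T x y ∈ (⊥ : Subring ℝ))
    (hγint : ∀ x, (e x : ℝ) * γ x ∈ (⊥ : Subring ℝ))
    (hD : ∀ r, e r * ∏ x ∈ univ.erase r, d x ∣ D) (hρ : ρ ≠ 0)
    (hbias : ∀ x, ρ + u x = γ x + ∑ y, T x y * u y) :
    1 / ((N : ℝ) * D) ≤ |ρ| := by
  obtain rfl | hDpos := D.eq_zero_or_pos
  · simp
  obtain ⟨f, hf, hfpos⟩ := exists_isArborescence_of_reflTransGen hr₀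
  have hW : 0 < ∑ x, treeWeight T x :=
    sum_pos' (fun x _ => treeWeight_nonneg hT0 x)
      ⟨r₀, mem_univ _, treeWeight_pos hT0 hf hfpos⟩
  have hWN : ∑ x, treeWeight T x ≤ N :=
    calc ∑ x, treeWeight T x ≤ ∑ _x : S, (1 : ℝ) :=
          sum_le_sum fun x _ => treeWeight_le_one hT0 hrow x
      _ ≤ N := by simpa using (Nat.cast_le.2 hN : (Fintype.card S : ℝ) ≤ N)
  have hint : ρ * (D * ∑ x, treeWeight T x) ∈ (⊥ : Subring ℝ) := by
    rw [mul_left_comm, gain_mul_sum_eq_of_stationary _ (sum_treeWeight_mul hrow) hbias, mul_sum]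
    refine sum_mem fun r _ => ?_
    obtain ⟨k, hk⟩ := hD r
    have hsplit : (D : ℝ) * (treeWeight T r * γ r) =
        k * ((∏ x ∈ univ.erase r, (d x : ℝ)) * treeWeight T r) * (e r * γ r) := by
      rw [hk]
      push_cast
      ring
    rw [hsplit]
    exact mul_mem (mul_mem (natCast_mem _ k) (treeWeight_mul_mem hTint r)) (hγint r)
  refine one_div_le_abs_of_mul_mem_bot hρ (mul_pos (by exact_mod_cast hDpos) hW) ?_ hint
  rw [mul_comm (N : ℝ)]
  gcongr

theorem one_div_le_abs_gain [Nonempty S] (N : ℕ) (hN : Fintype.card S ≤ N) (d e : S → ℕ)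
    (D : ℕ) (hT0 : ∀ x y, 0 ≤ T x y) (hrow : ∀ x, ∑ y, T x y = 1)
    (hTint : ∀ x y, (d x : ℝ) * T x y ∈ (⊥ : Subring ℝ))
    (hγint : ∀ x, (e x : ℝ) * γ x ∈ (⊥ : Subring ℝ))
    (hD : ∀ r, e r * ∏ x ∈ univ.erase r, d x ∣ D) (hρ : ρ ≠ 0)
    (hbias : ∀ x, ρ + u x = γ x + ∑ y, T x y * u y) :
    1 / ((N : ℝ) * D) ≤ |ρ| := by
  obtain ⟨C, r, hr, hclosed, hreach⟩ := exists_closed_class fun x y => 0 < T x y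
  have hsum : ∀ x ∈ C, ∀ w : S → ℝ, ∑ y : C, T x y * w y = ∑ y, T x y * w y := by
    intro x hx w
    rw [sum_coe_sort C fun y => T x y * w y]
    refine sum_subset (subset_univ C) fun y _ hy => ?_
    rw [(hT0 x y).antisymm' (not_lt.1 fun h => hy (hclosed x hx y h)), zero_mul]
  have hprod : ∀ x : C, ∏ y ∈ univ.erase x, d y ∣ ∏ y ∈ univ.erase x.1, d y := fun x =>
    prod_subtype_dvd_prod (fun y hy =>
      mem_erase.2 ⟨Subtype.coe_ne_coe.2 (ne_of_mem_erase hy), mem_univ _⟩) d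
  exact one_div_le_abs_gain_of_reflTransGen (S := C) (T := fun x y => T x y)
    (u := fun x => u x) (γ := fun x => γ x) N
    ((Fintype.card_coe C).trans_le ((card_le_univ C).trans hN)) (fun x => d x) (fun x => e x) D
    (r₀ := ⟨r, hr⟩) (fun x => (hreach x x.2).subtype hclosed x.2 hr) (fun x y => hT0 x y)
    (fun x => by simpa [hrow] using hsum x x.2 1) (fun x y => hTint x y) (fun x => hγint x)
    (fun x => (mul_dvd_mul_left _ (hprod x)).trans (hD x)) hρ
    (fun x => (hbias x).trans (by rw [hsum x x.2]))

end Gain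

section ShapleyOperator

theorem exists_csInf_eq {ι α : Type*} [Finite ι] [ConditionallyCompleteLinearOrder α]
    {p : ι → Prop} (f : ι → α) (h : ∃ i, p i) :
    ∃ i, p i ∧ sInf {r | ∃ i, p i ∧ r = f i} = f i := by
  obtain ⟨i, hi⟩ := h
  set s := {r | ∃ i, p i ∧ r = f i}
  have hfin : s.Finite :=
    (Set.finite_range f).subset <| by rintro _ ⟨i, -, rfl⟩; exact ⟨i, rfl⟩
  have hne : s.Nonempty := ⟨f i, i, hi, rfl⟩
  obtain ⟨j, hj, hmem⟩ := hne.csInf_mem hfin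
  exact ⟨j, hj, hmem⟩

theorem exists_csSup_eq {ι α : Type*} [Finite ι] [ConditionallyCompleteLinearOrder α]
    {p : ι → Prop} (f : ι → α) (h : ∃ i, p i) :
    ∃ i, p i ∧ sSup {r | ∃ i, p i ∧ r = f i} = f i :=
  exists_csInf_eq (α := αᵒᵈ) f h

theorem sval_coe (x : ℝ) : sval x = x := WithBot.unbotD_coe _ _

variable {A : Fin m → Fin n → WithBot ℝ} {B : Fin m → Fin q → WithBot ℝ}
  {P : Fin q → Fin n → ℝ}

theorem exists_shapley_apply_eq (hAcol : ∀ j, ∃ i, A i j ≠ ⊥)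
    (hBrow : ∀ i, ∃ k, B i k ≠ ⊥)
    (hAint : ∀ i j, A i j = ⊥ ∨ ∃ z : ℤ, A i j = ((z : ℝ) : WithBot ℝ))
    (hBint : ∀ i k, B i k = ⊥ ∨ ∃ z : ℤ, B i k = ((z : ℝ) : WithBot ℝ))
    (x : Fin n → ℝ) (j : Fin n) :
    ∃ (k : Fin q) (z : ℤ), shapley A B P x j = z + ∑ l, P k l * x l := by
  obtain ⟨i, hAij, hi⟩ := exists_csInf_eq (fun i => -sval (A i j) +
    sSup {s | ∃ k, B i k ≠ ⊥ ∧ s = sval (B i k) + ∑ l, P k l * x l}) (hAcol j)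
  obtain ⟨k, hBik, hk⟩ := exists_csSup_eq (fun k => sval (B i k) + ∑ l, P k l * x l) (hBrow i)
  obtain ⟨a, ha⟩ := (hAint i j).resolve_left hAij
  obtain ⟨b, hb⟩ := (hBint i k).resolve_left hBik
  refine ⟨k, b - a, ?_⟩
  simp only [shapley, hi, hk, ha, hb, sval_coe]
  push_cast
  ring

theorem eq_one_of_card_filter_pos_le_one {ι : Type*} [Fintype ι] {p : ι → ℝ}
    (h0 : ∀ i, 0 ≤ p i) (h1 : ∑ i, p i = 1) (hcard : #{i | 0 < p i} ≤ 1) {i : ι}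
    (hi : 0 < p i) : p i = 1 := by
  refine (sum_eq_single i (fun j _ hj => ?_) fun h => absurd (mem_univ i) h).symm.trans h1
  refine (h0 j).antisymm' (not_lt.1 fun hj' => hj ?_)
  exact card_le_one.1 hcard j (by simpa using hj') i (by simpa using hi)

def rowDenom (M : ℕ) (P : Fin q → Fin n → ℝ) (k : Fin q) : ℕ :=
  if 1 < #{l | 0 < P k l} then M else 1

theorem prod_rowDenom (M : ℕ) (P : Fin q → Fin n → ℝ) :
    ∏ k, rowDenom M P k = M ^ nondetCount P := by
  simp [rowDenom, nondetCount, prod_ite]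

theorem rowDenom_mul_mem {M : ℕ} (hP0 : ∀ k l, 0 ≤ P k l) (hPsum : ∀ k, ∑ l, P k l = 1)
    (hMP : ∀ k l, (M : ℝ) * P k l ∈ (⊥ : Subring ℝ)) (k : Fin q) (l : Fin n) :
    (rowDenom M P k : ℝ) * P k l ∈ (⊥ : Subring ℝ) := by
  unfold rowDenom
  split_ifs with hk
  · exact hMP k l
  · rw [Nat.cast_one, one_mul]
    rcases (hP0 k l).eq_or_lt with h | h
    · exact h ▸ zero_mem _
    · exact eq_one_of_card_filter_pos_le_one (hP0 k) (hPsum k) (not_lt.1 hk) h ▸ one_mem _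

theorem sum_mul_comp_eq_sum_fiberwise {ι κ : Type*} [Fintype ι] [Fintype κ] [DecidableEq κ]
    (p : ι → ℝ) (g : ι → κ) (w : κ → ℝ) :
    ∑ i, p i * w (g i) = ∑ k, (∑ i with g i = k, p i) * w k := by
  simp_rw [sum_mul]
  rw [← sum_fiberwise univ g fun i => p i * w (g i)]
  exact sum_congr rfl fun k _ => sum_congr rfl fun i hi => by rw [(mem_filter.1 hi).2]

variable {M : ℕ} [Nonempty (Fin n)] {v : Fin n → ℝ} {ρ : ℝ}

theorem one_div_le_abs_of_policy_pow_pred (hP0 : ∀ k l, 0 ≤ P k l)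
    (hPsum : ∀ k, ∑ l, P k l = 1) (hMP : ∀ k l, (M : ℝ) * P k l ∈ (⊥ : Subring ℝ))
    (σ : Fin n → Fin q) (c : Fin n → ℤ) (hρ : ρ ≠ 0)
    (hσ : ∀ j, ρ + v j = c j + ∑ l, P (σ j) l * v l) :
    1 / ((n : ℝ) * M ^ (n - 1)) ≤ |ρ| := by
  have hD : ∀ r : Fin n, 1 * ∏ _x ∈ univ.erase r, M ∣ M ^ (n - 1) := fun r => by
    simp [card_erase_of_mem]
  exact_mod_cast one_div_le_abs_gain n (Fintype.card_fin n).le (fun _ => M) (fun _ => 1)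
    (M ^ (n - 1)) (fun j l => hP0 (σ j) l) (fun j => hPsum (σ j)) (fun j l => hMP (σ j) l)
    (fun j => by simp) hD hρ hσ

theorem one_div_le_abs_of_policy_pow_nondetCount (hP0 : ∀ k l, 0 ≤ P k l)
    (hPsum : ∀ k, ∑ l, P k l = 1) (hMP : ∀ k l, (M : ℝ) * P k l ∈ (⊥ : Subring ℝ))
    (σ : Fin n → Fin q) (c : Fin n → ℤ) (hρ : ρ ≠ 0)
    (hσ : ∀ j, ρ + v j = c j + ∑ l, P (σ j) l * v l) :
    1 / ((n : ℝ) * M ^ nondetCount P) ≤ |ρ| := by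
  -- lump the columns `l` into the states `σ l` they are sent to
  let π := Set.rangeFactorization σ
  have : Nonempty (Set.range σ) := ⟨π (Classical.arbitrary _)⟩
  have hD : ∀ r : Set.range σ,
      rowDenom M P r * ∏ x ∈ univ.erase r, rowDenom M P x ∣ M ^ nondetCount P := fun r => by
    rw [mul_prod_erase univ (fun x : Set.range σ => rowDenom M P x) (mem_univ r),
      ← prod_rowDenom]
    exact prod_subtype_dvd_prod (fun _ _ => mem_univ _) _
  have hbias : ∀ r : Set.range σ, ρ + ∑ l, P r l * v l =
      ∑ l, P r l * c l + ∑ r', (∑ l with π l = r', P r l) * ∑ l', P r' l' * v l' :=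
        fun r => by
    rw [← sum_mul_comp_eq_sum_fiberwise (P r) π fun r' : Set.range σ => ∑ l', P r' l' * v l']
    calc ρ + ∑ l, P r l * v l = ∑ l, P r l * (ρ + v l) := by
          simp only [mul_add, sum_add_distrib, ← sum_mul, hPsum, one_mul]
      _ = ∑ l, P r l * (c l + ∑ l', P (σ l) l' * v l') := by simp_rw [hσ]
      _ = _ := by simp only [mul_add, sum_add_distrib]; rfl
  exact_mod_cast one_div_le_abs_gain (T := fun r r' => ∑ l with π l = r', P r l)
    (γ := fun r => ∑ l, P r l * c l) n ((Fintype.card_range_le σ).trans (Fintype.card_fin n).le)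
    (fun r => rowDenom M P r) (fun r => rowDenom M P r) _
    (fun _ _ => sum_nonneg fun _ _ => hP0 _ _) (fun r => by rw [sum_fiberwise]; exact hPsum r)
    (fun r _ => by
      rw [mul_sum]
      exact sum_mem fun l _ => rowDenom_mul_mem hP0 hPsum hMP r l)
    (fun r => by
      rw [mul_sum]
      exact sum_mem fun l _ => mul_assoc (rowDenom M P r : ℝ) _ (c l : ℝ) ▸
        mul_mem (rowDenom_mul_mem hP0 hPsum hMP r l) (intCast_mem _ _))
    hD hρ hbias

end ShapleyOperator

/-- Bound on the condition number: if `F` has a bias vector with nonzero ergodic constant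
`ρ`, then `|ρ| ≥ 1 / (n * M ^ min(k, n-1))`, where `k` is the number of nondeterministic
states. -/
theorem stmt11 {M : ℕ} (hM : 1 ≤ M)
    (A : Fin m → Fin n → WithBot ℝ) (B : Fin m → Fin q → WithBot ℝ)
    (P : Fin q → Fin n → ℝ) (Q : Fin q → Fin n → ℕ)
    (hAcol : ∀ j, ∃ i, A i j ≠ ⊥)
    (hBrow : ∀ i, ∃ k, B i k ≠ ⊥)
    (hAint : ∀ i j, A i j = ⊥ ∨ ∃ z : ℤ, A i j = ((z : ℝ) : WithBot ℝ))
    (hBint : ∀ i k, B i k = ⊥ ∨ ∃ z : ℤ, B i k = ((z : ℝ) : WithBot ℝ))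
    (hPQ : ∀ k l, P k l = (Q k l : ℝ) / (M : ℝ))
    (hPsum : ∀ k, ∑ l, P k l = 1)
    (v : Fin n → ℝ) (ρ : ℝ) (hρ : ρ ≠ 0)
    (hbias : shapley A B P v = fun j => ρ + v j) :
    1 / ((n : ℝ) * (M : ℝ) ^ (min (nondetCount P) (n - 1))) ≤ |ρ| := by
  obtain rfl | hn := n.eq_zero_or_pos
  · simp
  have : Nonempty (Fin n) := ⟨⟨0, hn⟩⟩
  have hP0 : ∀ k l, 0 ≤ P k l := fun k l => by
    rw [hPQ]
    positivity
  have hMP : ∀ k l, (M : ℝ) * P k l ∈ (⊥ : Subring ℝ) := fun k l => by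
    rw [hPQ, mul_div_cancel₀ _ (Nat.cast_ne_zero.2 (by omega))]
    exact natCast_mem _ _
  choose σ c hσ using exists_shapley_apply_eq (P := P) hAcol hBrow hAint hBint v
  have hpolicy : ∀ j, ρ + v j = c j + ∑ l, P (σ j) l * v l := fun j =>
    (congrFun hbias j).symm.trans (hσ j)
  rcases le_total (n - 1) (nondetCount P) with h | h
  · rw [min_eq_right h]
    exact one_div_le_abs_of_policy_pow_pred hP0 hPsum hMP σ c hρ hpolicy
  · rw [min_eq_left h]
    exact one_div_le_abs_of_policy_pow_nondetCount hP0 hPsum hMP σ c hρ hpolicy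
end
end
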